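/- arXiv:2602.07175 — 8 statements merged into one kernel-verified Lean document; each statement's English description precedes it below -/
import Mathlib

section
/- Let x, y, z ∈ ℂ and let α, β : ℕ → ℂ with α 0 = β 0. Let B be the n×n matrix determined by B_{i,0} = α i, B_{0,j} = β j, and B_{i,j} = x B_{i,j-1} + y B_{i-1,j-1} + z B_{i-1,j} for i, j ≥ 1. Let v, w ∈ ℂ and let A be the n×n matrix with A_{i,j} = C(i,j) v^j w^{i-j}. Then A·B is the weighted recurrence matrix with parameters (x, vy - wx, vz + w) whose first column is η_i = Σ_{k=0}^{i} C(i,k) v^k w^{i-k} α_k and whose first row is β; that is, (AB)_{i,0} = η_i, (AB)_{0,j} = β_j, and (AB)_{i,j} = x (AB)_{i,j-1} + (vy - wx)(AB)_{i-1,j-1} + (vz + w)(AB)_{i-1,j} for all 1 ≤ i, j ≤ n-1. -/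
open Matrix Finset

private lemma aux_sum (v w : ℂ) (f : ℕ → ℂ) (m : ℕ) :
    (∑ k ∈ Finset.range (m + 2), ((m + 1).choose k : ℂ) * v ^ k * w ^ (m + 1 - k) * f k)
      = w * (∑ k ∈ Finset.range (m + 1), (m.choose k : ℂ) * v ^ k * w ^ (m - k) * f k)
        + v * (∑ k ∈ Finset.range (m + 1), (m.choose k : ℂ) * v ^ k * w ^ (m - k) * f (k + 1)) := by
  have h1 : (∑ k ∈ Finset.range (m + 2), ((m + 1).choose k : ℂ) * v ^ k * w ^ (m + 1 - k) * f k)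
      = (∑ k ∈ Finset.range (m + 1),
          (((m.choose k : ℂ)) * v ^ (k + 1) * w ^ (m - k)
            + (m.choose (k + 1) : ℂ) * v ^ (k + 1) * w ^ (m - k)) * f (k + 1))
        + w ^ (m + 1) * f 0 := by
    rw [Finset.sum_range_succ']
    congr 1
    · refine Finset.sum_congr rfl fun k hk => ?_
      have h : m + 1 - (k + 1) = m - k := by omega
      rw [h, Nat.choose_succ_succ]
      push_cast; ring
    · simp
  have h2 : w * (∑ k ∈ Finset.range (m + 1), (m.choose k : ℂ) * v ^ k * w ^ (m - k) * f k)
      = (∑ k ∈ Finset.range (m + 1),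
            (m.choose (k + 1) : ℂ) * v ^ (k + 1) * w ^ (m - k) * f (k + 1))
        + w ^ (m + 1) * f 0 := by
    rw [Finset.mul_sum,
      Finset.sum_range_succ' (fun k => w * ((m.choose k : ℂ) * v ^ k * w ^ (m - k) * f k)) m,
      Finset.sum_range_succ (fun k => (m.choose (k + 1) : ℂ) * v ^ (k + 1) * w ^ (m - k) * f (k + 1)) m]
    simp only [Nat.choose_succ_self, Nat.cast_zero, zero_mul, add_zero, Nat.choose_zero_right,
      Nat.cast_one, one_mul, pow_zero, Nat.sub_zero]
    congr 1
    · refine Finset.sum_congr rfl fun k hk => ?_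
      rw [Finset.mem_range] at hk
      have h : m - k = (m - (k + 1)) + 1 := by omega
      rw [h]; ring
    · ring
  have h3 : ∀ k, (((m.choose k : ℂ)) * v ^ (k + 1) * w ^ (m - k)
            + (m.choose (k + 1) : ℂ) * v ^ (k + 1) * w ^ (m - k)) * f (k + 1)
      = v * ((m.choose k : ℂ) * v ^ k * w ^ (m - k) * f (k + 1))
        + (m.choose (k + 1) : ℂ) * v ^ (k + 1) * w ^ (m - k) * f (k + 1) := fun k => by ring
  rw [h1, h2]
  simp_rw [h3, Finset.sum_add_distrib, ← Finset.mul_sum]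
  ring

theorem stmt_3 (n : ℕ) (x y z v w : ℂ) (α β : ℕ → ℂ) (hαβ : α 0 = β 0)
    (B : ℕ → ℕ → ℂ)
    (hcol : ∀ i, B i 0 = α i) (hrow : ∀ j, B 0 j = β j)
    (hrec : ∀ i j, 1 ≤ i → 1 ≤ j →
      B i j = x * B i (j - 1) + y * B (i - 1) (j - 1) + z * B (i - 1) j) :
    let A : Matrix (Fin n) (Fin n) ℂ :=
      Matrix.of fun i j : Fin n => (Nat.choose i j : ℂ) * v ^ (j : ℕ) * w ^ ((i : ℕ) - (j : ℕ))
    let C : Matrix (Fin n) (Fin n) ℂ := A * Matrix.of fun i j : Fin n => B i j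
    (∀ (i : ℕ) (hi : i < n) (h0 : 0 < n),
        C ⟨i, hi⟩ ⟨0, h0⟩ =
          ∑ k ∈ Finset.range (i + 1), (Nat.choose i k : ℂ) * v ^ k * w ^ (i - k) * α k) ∧
    (∀ (j : ℕ) (hj : j < n) (h0 : 0 < n), C ⟨0, h0⟩ ⟨j, hj⟩ = β j) ∧
    (∀ (i j : ℕ) (hi : i < n) (hj : j < n), 1 ≤ i → 1 ≤ j →
        C ⟨i, hi⟩ ⟨j, hj⟩ =
          x * C ⟨i, hi⟩ ⟨j - 1, by omega⟩ +
            (v * y - w * x) * C ⟨i - 1, by omega⟩ ⟨j - 1, by omega⟩ +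
            (v * z + w) * C ⟨i - 1, by omega⟩ ⟨j, hj⟩) := by
  intro A C
  set S : ℕ → ℕ → ℂ := fun i j =>
    ∑ k ∈ Finset.range (i + 1), (Nat.choose i k : ℂ) * v ^ k * w ^ (i - k) * B k j with hS
  have hCS : ∀ (i j : ℕ) (hi : i < n) (hj : j < n), C ⟨i, hi⟩ ⟨j, hj⟩ = S i j := by
    intro i j hi hj
    show (∑ k : Fin n, A ⟨i, hi⟩ k * B k j) = S i j
    have : (∑ k : Fin n, A ⟨i, hi⟩ k * B k j)
        = ∑ k ∈ Finset.range n, (Nat.choose i k : ℂ) * v ^ k * w ^ (i - k) * B k j := by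
      rw [← Fin.sum_univ_eq_sum_range (fun k => (Nat.choose i k : ℂ) * v ^ k * w ^ (i - k) * B k j) n]
      exact Finset.sum_congr rfl fun k _ => by simp [A]
    rw [this, hS]
    refine (Finset.sum_subset (by intro a ha; rw [Finset.mem_range] at *; omega) ?_).symm
    intro k _ hk
    rw [Finset.mem_range, not_lt] at hk
    rw [Nat.choose_eq_zero_of_lt (by omega)]
    simp
  -- key shift lemma
  have key : ∀ m j, S (m + 1) j = w * S m j
      + v * ∑ k ∈ Finset.range (m + 1), (Nat.choose m k : ℂ) * v ^ k * w ^ (m - k) * B (k + 1) j :=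
    fun m j => aux_sum v w (fun k => B k j) m
  refine ⟨?_, ?_, ?_⟩
  · intro i hi h0
    rw [hCS i 0 hi h0, hS]
    exact Finset.sum_congr rfl fun k _ => by rw [hcol]
  · intro j hj h0
    rw [hCS 0 j h0 hj, hS]
    simp [hrow]
  · intro i j hi hj hi1 hj1
    rw [hCS i j hi hj, hCS i (j - 1) hi (by omega), hCS (i - 1) (j - 1) (by omega) (by omega),
      hCS (i - 1) j (by omega) hj]
    obtain ⟨m, rfl⟩ : ∃ m, i = m + 1 := ⟨i - 1, by omega⟩
    obtain ⟨l, rfl⟩ : ∃ l, j = l + 1 := ⟨j - 1, by omega⟩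
    simp only [Nat.add_sub_cancel]
    have e1 := key m (l + 1)
    have e2 := key m l
    have e3 : (∑ k ∈ Finset.range (m + 1), (Nat.choose m k : ℂ) * v ^ k * w ^ (m - k) * B (k + 1) (l + 1))
        = x * (∑ k ∈ Finset.range (m + 1), (Nat.choose m k : ℂ) * v ^ k * w ^ (m - k) * B (k + 1) l)
          + y * S m l + z * S m (l + 1) := by
      rw [hS]
      simp_rw [Finset.mul_sum, ← Finset.sum_add_distrib]
      refine Finset.sum_congr rfl fun k _ => ?_
      have hb := hrec (k + 1) (l + 1) (by omega) (by omega)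
      simp only [Nat.add_sub_cancel] at hb
      rw [hb]; ring
    rw [e1, e3]
    linear_combination (-x) * e2
end

section
/- Let x, y, z ∈ ℂ with y + xz ≠ 0, and let α, β : ℕ → ℂ with α 0 = β 0. Define sequences α̃ and β̃ by α̃_0 = α_0, α̃_i = α_i − Σ_{k=0}^{i-1} C(i,k) z^{i-k} α̃_k for i ≥ 1, and β̃_0 = β_0, β̃_i = (β_i − Σ_{k=0}^{i-1} C(i,k) x^{i-k} (y+xz)^k β̃_k) / (y+xz)^i for i ≥ 1. Then the n×n weighted recurrence matrix P with parameters (x,y,z), first column α, first row β factors as P = L · T · Rᵗ, where L_{i,j} = C(i,j) z^{i-j}, T is the Toeplitz matrix with T_{i,j} = α̃_{i-j} for i ≥ j and T_{i,j} = β̃_{j-i} for i < j, and R_{i,j} = C(i,j) (y+xz)^j x^{i-j}. -/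
open Matrix Finset

/-!
Write `w = y + x z`. With `L`, `T`, `R` extended to infinite matrices, `Q = L T Rᵗ` has first
column `L α̃ = α` and first row `R β̃ = β`: the recursions defining `α̃` and `β̃` are exactly the
inversions of these two triangular systems. Pascal's rule for the rows of `R` gives
`Q_{i,j+1} = x Q_{i,j} + w Q'_{i,j}`, where `Q' = L T' Rᵗ` and `T'` is `T` shifted one column to
the left; Pascal's rule for `L` together with the Toeplitz property `T_{k+1,l+1} = T_{k,l}` gives
`Q'_{i+1,j} = Q_{i,j} + z Q'_{i,j}`. Eliminating `Q'` shows that `Q` satisfies the weighted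
recurrence, so `Q = P`.
-/

namespace WeightedRecurrence

section Arrays

variable {α : Type*}

theorem eq_of_boundary_of_succ_succ {P Q : ℕ → ℕ → α} (F : α → α → α → α)
    (hcol : ∀ i, P i 0 = Q i 0) (hrow : ∀ j, P 0 j = Q 0 j)
    (hP : ∀ i j, P (i + 1) (j + 1) = F (P (i + 1) j) (P i j) (P i (j + 1)))
    (hQ : ∀ i j, Q (i + 1) (j + 1) = F (Q (i + 1) j) (Q i j) (Q i (j + 1))) :
    P = Q := by
  funext i j
  induction i generalizing j with
  | zero => exact hrow j
  | succ i ih =>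
    induction j with
    | zero => exact hcol _
    | succ j ihj => rw [hP, hQ, ihj, ih j, ih (j + 1)]

/-- `tb 0` is never read. -/
def toeplitzEntry (ta tb : ℕ → α) (k l : ℕ) : α := if l ≤ k then ta (k - l) else tb (l - k)

theorem toeplitzEntry_succ_succ (ta tb : ℕ → α) (k l : ℕ) :
    toeplitzEntry ta tb (k + 1) (l + 1) = toeplitzEntry ta tb k l := by
  simp [toeplitzEntry]

end Arrays

section CommRing

variable {R : Type*} [CommRing R]

/-- `L` is `weightedPascal z 1` and `R` is `weightedPascal x (y + x z)`. -/
def weightedPascal (a b : R) (i k : ℕ) : R := (i.choose k : R) * b ^ k * a ^ (i - k)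

theorem weightedPascal_of_lt (a b : R) {i k : ℕ} (h : i < k) : weightedPascal a b i k = 0 := by
  simp [weightedPascal, Nat.choose_eq_zero_of_lt h]

theorem weightedPascal_self (a b : R) (i : ℕ) : weightedPascal a b i i = b ^ i := by
  simp [weightedPascal]

theorem weightedPascal_succ_zero (a b : R) (i : ℕ) :
    weightedPascal a b (i + 1) 0 = a * weightedPascal a b i 0 := by
  simp [weightedPascal, pow_succ, mul_comm]

theorem weightedPascal_succ_succ (a b : R) (i k : ℕ) :
    weightedPascal a b (i + 1) (k + 1) =
      b * weightedPascal a b i k + a * weightedPascal a b i (k + 1) := by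
  unfold weightedPascal
  rw [Nat.choose_succ_succ, Nat.succ_sub_succ]
  rcases lt_or_ge i (k + 1) with h | h
  · simp [Nat.choose_eq_zero_of_lt h, pow_succ]
    ring
  · rw [show i - k = i - (k + 1) + 1 by omega]
    push_cast
    ring

def pascalTransform (a b : R) (i : ℕ) (g : ℕ → R) : R :=
  ∑ k ∈ range (i + 1), weightedPascal a b i k * g k

theorem pascalTransform_zero (a b : R) (g : ℕ → R) : pascalTransform a b 0 g = g 0 := by
  simp [pascalTransform, weightedPascal]

theorem pascalTransform_succ (a b : R) (i : ℕ) (g : ℕ → R) :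
    pascalTransform a b (i + 1) g =
      a * pascalTransform a b i g + b * pascalTransform a b i (fun k => g (k + 1)) := by
  have extend :
      pascalTransform a b i g = ∑ k ∈ range (i + 1 + 1), weightedPascal a b i k * g k := by
    rw [sum_range_succ, weightedPascal_of_lt a b (Nat.lt_succ_self i), zero_mul, add_zero,
      pascalTransform]
  rw [extend, pascalTransform, pascalTransform, sum_range_succ' _ (i + 1),
    sum_range_succ' _ (i + 1)]
  simp only [weightedPascal_succ_succ, weightedPascal_succ_zero, mul_add, add_mul,
    sum_add_distrib, mul_sum, mul_assoc]
  ring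

theorem pascalTransform_add_mul (a b c : R) (i : ℕ) (f g : ℕ → R) :
    pascalTransform a b i (fun k => f k + c * g k) =
      pascalTransform a b i f + c * pascalTransform a b i g := by
  rw [pascalTransform, pascalTransform, pascalTransform, mul_sum, ← sum_add_distrib]
  exact sum_congr rfl fun k _ => by ring

theorem pascalTransform_eq_of_pow_mul_eq (a b : R) {f g : ℕ → R} {i : ℕ}
    (h : b ^ i * g i = f i - ∑ k ∈ range i, weightedPascal a b i k * g k) :
    pascalTransform a b i g = f i := by
  rw [pascalTransform, sum_range_succ, weightedPascal_self, h]
  ring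

theorem sum_range_weightedPascal_mul {n i : ℕ} (hi : i < n) (a b : R) (g : ℕ → R) :
    ∑ k ∈ range n, weightedPascal a b i k * g k = pascalTransform a b i g := by
  refine (sum_subset (range_subset_range.2 hi) fun k _ hk => ?_).symm
  rw [weightedPascal_of_lt a b (by simpa using hk), zero_mul]

/-- The entries of `L T`. -/
def lowerToeplitz (z : R) (ta tb : ℕ → R) (i l : ℕ) : R :=
  pascalTransform z 1 i (toeplitzEntry ta tb · l)

/-- The entries of `L T Rᵗ`. -/
def factoredArray (x y z : R) (ta tb : ℕ → R) (i j : ℕ) : R :=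
  pascalTransform x (y + x * z) j (lowerToeplitz z ta tb i)

theorem lowerToeplitz_succ_succ (z : R) (ta tb : ℕ → R) (i l : ℕ) :
    lowerToeplitz z ta tb (i + 1) (l + 1) =
      lowerToeplitz z ta tb i l + z * lowerToeplitz z ta tb i (l + 1) := by
  simp only [lowerToeplitz, pascalTransform_succ, toeplitzEntry_succ_succ, one_mul]
  ring

theorem factoredArray_succ_succ (x y z : R) (ta tb : ℕ → R) (i j : ℕ) :
    factoredArray x y z ta tb (i + 1) (j + 1) =
      x * factoredArray x y z ta tb (i + 1) j + y * factoredArray x y z ta tb i j +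
        z * factoredArray x y z ta tb i (j + 1) := by
  have step_lower := pascalTransform_succ x (y + x * z) j (lowerToeplitz z ta tb (i + 1))
  have step_upper := pascalTransform_succ x (y + x * z) j (lowerToeplitz z ta tb i)
  have shifted :
      pascalTransform x (y + x * z) j (fun l => lowerToeplitz z ta tb (i + 1) (l + 1)) =
      factoredArray x y z ta tb i j +
        z * pascalTransform x (y + x * z) j (fun l => lowerToeplitz z ta tb i (l + 1)) := by
    simp only [lowerToeplitz_succ_succ]
    exact pascalTransform_add_mul _ _ _ _ _ _
  unfold factoredArray at shifted ⊢
  linear_combination step_lower + (y + x * z) * shifted - z * step_upper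

theorem factoredArray_zero_right (x y z : R) (ta tb : ℕ → R) (i : ℕ) :
    factoredArray x y z ta tb i 0 = pascalTransform z 1 i ta := by
  simp [factoredArray, pascalTransform_zero, lowerToeplitz, toeplitzEntry]

theorem factoredArray_zero_left (x y z : R) {ta tb : ℕ → R} (h : ta 0 = tb 0) (j : ℕ) :
    factoredArray x y z ta tb 0 j = pascalTransform x (y + x * z) j tb := by
  unfold factoredArray
  congr 1
  funext l
  rcases l with _ | l <;> simp [lowerToeplitz, pascalTransform_zero, toeplitzEntry, h]

theorem of_mul_of_mul_transpose_of_apply {n : ℕ} (a b c d : R) (T : ℕ → ℕ → R)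
    (i j : Fin n) :
    ((of fun i j : Fin n => weightedPascal a b i j) * (of fun i j : Fin n => T i j) *
        (of fun i j : Fin n => weightedPascal c d i j)ᵀ) i j =
      pascalTransform c d j (fun l => pascalTransform a b i (T · l)) := by
  simp only [mul_apply, of_apply, transpose_apply]
  have inner (l : ℕ) :
      ∑ k : Fin n, weightedPascal a b i k * T k l = pascalTransform a b i (T · l) := by
    rw [Fin.sum_univ_eq_sum_range (fun k => weightedPascal a b i k * T k l),
      sum_range_weightedPascal_mul i.isLt]
  simp_rw [inner, mul_comm _ (weightedPascal c d j _)]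
  rw [Fin.sum_univ_eq_sum_range
      (fun l => weightedPascal c d j l * pascalTransform a b i (T · l)),
    sum_range_weightedPascal_mul j.isLt]

end CommRing

end WeightedRecurrence

open WeightedRecurrence

theorem stmt_5 (n : ℕ) (x y z : ℂ) (hxyz : y + x * z ≠ 0)
    (α β : ℕ → ℂ) (hαβ : α 0 = β 0)
    (P : ℕ → ℕ → ℂ)
    (hcol : ∀ i, P i 0 = α i) (hrow : ∀ j, P 0 j = β j)
    (hrec : ∀ i j, 1 ≤ i → 1 ≤ j →
      P i j = x * P i (j - 1) + y * P (i - 1) (j - 1) + z * P (i - 1) j)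
    (ta tb : ℕ → ℂ)
    (hta0 : ta 0 = α 0)
    (hta : ∀ i, 1 ≤ i →
      ta i = α i - ∑ k ∈ Finset.range i, (Nat.choose i k : ℂ) * z ^ (i - k) * ta k)
    (htb0 : tb 0 = β 0)
    (htb : ∀ i, 1 ≤ i →
      tb i = (β i - ∑ k ∈ Finset.range i,
        (Nat.choose i k : ℂ) * x ^ (i - k) * (y + x * z) ^ k * tb k) / (y + x * z) ^ i) :
    (Matrix.of fun i j : Fin n => P i j) =
      (Matrix.of fun i j : Fin n => (Nat.choose i j : ℂ) * z ^ ((i : ℕ) - (j : ℕ))) *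
        (Matrix.of fun i j : Fin n =>
          if (j : ℕ) ≤ (i : ℕ) then ta ((i : ℕ) - (j : ℕ)) else tb ((j : ℕ) - (i : ℕ))) *
        (Matrix.of fun i j : Fin n =>
          (Nat.choose i j : ℂ) * (y + x * z) ^ (j : ℕ) * x ^ ((i : ℕ) - (j : ℕ)))ᵀ := by
  have col (i : ℕ) : pascalTransform z 1 i ta = α i := by
    refine pascalTransform_eq_of_pow_mul_eq z 1 ?_
    rcases Nat.eq_zero_or_pos i with rfl | hi
    · simp [hta0]
    · simpa [weightedPascal] using hta i hi
  have row (j : ℕ) : pascalTransform x (y + x * z) j tb = β j := by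
    refine pascalTransform_eq_of_pow_mul_eq x _ ?_
    rcases Nat.eq_zero_or_pos j with rfl | hj
    · simp [htb0]
    · rw [htb j hj, mul_div_cancel₀ _ (pow_ne_zero _ hxyz)]
      exact congrArg _ (sum_congr rfl fun k _ => by rw [weightedPascal]; ring)
  have hPQ : P = factoredArray x y z ta tb :=
    eq_of_boundary_of_succ_succ (fun p q r => x * p + y * q + z * r)
      (fun i => by rw [hcol, factoredArray_zero_right, col])
      (fun j => by
        rw [hrow, factoredArray_zero_left x y z (hta0.trans (hαβ.trans htb0.symm)), row])
      (fun i j => by simpa using hrec (i + 1) (j + 1) (by omega) (by omega))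
      (factoredArray_succ_succ x y z ta tb)
  have hL : (of fun i j : Fin n => (Nat.choose i j : ℂ) * z ^ ((i : ℕ) - (j : ℕ))) =
      of fun i j : Fin n => weightedPascal z 1 i j := by
    ext
    simp [weightedPascal]
  ext i j
  rw [hL, hPQ]
  exact (of_mul_of_mul_transpose_of_apply z 1 x (y + x * z) (toeplitzEntry ta tb) i j).symm
end

section
/- Let x, y, z ∈ ℂ with y + xz ≠ 0 and let c ∈ ℂ. Let P be the n×n weighted recurrence matrix with parameters (x,y,z), whose first column is α_i = c z^i and first row is β_j = c x^j. Then det P = c^n (y + xz)^{n(n-1)/2}. -/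
open Matrix

-- lower bidiagonal unit matrix
def Lm (z : ℂ) (n : ℕ) : Matrix (Fin (n+1)) (Fin (n+1)) ℂ :=
  Matrix.of fun i j => if i = j then 1 else if (i:ℕ) = (j:ℕ)+1 then -z else 0

lemma Lm_det (z : ℂ) (n : ℕ) : (Lm z n).det = 1 := by
  have h : (Lm z n).BlockTriangular OrderDual.toDual := by
    intro i j hij
    simp only [Lm, of_apply]
    have h1 : i ≠ j := fun h => by simp [h] at hij
    have h2 : (i:ℕ) ≠ (j:ℕ)+1 := by
      intro h; exact absurd (by omega : (j:ℕ) < (i:ℕ)) (by simpa using hij.le.not_gt)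
    simp [h1, h2]
  rw [det_of_lowerTriangular _ h]
  simp [Lm]

lemma Lm_mul_zero (z : ℂ) (n : ℕ) (A : Matrix (Fin (n+1)) (Fin (n+1)) ℂ) (j : Fin (n+1)) :
    (Lm z n * A) 0 j = A 0 j := by
  rw [mul_apply]
  rw [Finset.sum_eq_single 0]
  · simp [Lm]
  · intro k _ hk
    simp [Lm, hk.symm] -- (0:ℕ) = k+1 is false
  · simp

lemma Lm_mul_succ (z : ℂ) (n : ℕ) (A : Matrix (Fin (n+1)) (Fin (n+1)) ℂ) (i : Fin n)
    (j : Fin (n+1)) :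
    (Lm z n * A) i.succ j = A i.succ j - z * A i.castSucc j := by
  rw [mul_apply]
  have hne : (i.succ : Fin (n+1)) ≠ i.castSucc := by
    intro h; have := congrArg Fin.val h; simp at this
  have key : ∀ k : Fin (n+1), Lm z n i.succ k * A k j =
      (if k = i.succ then A i.succ j else 0) + (if k = i.castSucc then -z * A i.castSucc j else 0) := by
    intro k
    by_cases h1 : k = i.succ
    · subst h1; simp [Lm, hne]
    · by_cases h2 : k = i.castSucc
      · subst h2
        simp only [Lm, of_apply]
        have h1' : i.castSucc ≠ i.succ := fun h => hne h.symm
        simp only [if_neg hne, if_neg h1', if_pos rfl]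
        simp
      · have hne1 : i.succ ≠ k := fun h => h1 h.symm
        have hne2 : (i:ℕ) ≠ (k:ℕ) := fun h => h2 (Fin.ext (by simp [← h]))
        simp [Lm, hne1, hne2, h1, h2]
  rw [Finset.sum_congr rfl fun k _ => key k, Finset.sum_add_distrib]
  rw [Finset.sum_ite_eq' Finset.univ i.succ, Finset.sum_ite_eq' Finset.univ i.castSucc]
  simp; ring

lemma mul_Rm_eq (x : ℂ) (n : ℕ) (A : Matrix (Fin (n+1)) (Fin (n+1)) ℂ) (i j : Fin (n+1)) :
    (A * (Lm x n)ᵀ) i j = (Lm x n * Aᵀ) j i := by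
  rw [← transpose_apply (A * (Lm x n)ᵀ), transpose_mul, transpose_transpose]

lemma step_lemma (n : ℕ) (x y z c : ℂ)
    (P : ℕ → ℕ → ℂ)
    (hcol : ∀ i, P i 0 = c * z ^ i) (hrow : ∀ j, P 0 j = c * x ^ j)
    (hrec : ∀ i j, 1 ≤ i → 1 ≤ j →
      P i j = x * P i (j - 1) + y * P (i - 1) (j - 1) + z * P (i - 1) j) :
    (Matrix.of fun i j : Fin (n+1) => P i j).det =
      c * ((y + x * z) ^ n * (Matrix.of fun i j : Fin n => P i j).det) := by
  set A : Matrix (Fin (n+1)) (Fin (n+1)) ℂ := Matrix.of fun i j => P i j with hA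
  set M : Matrix (Fin (n+1)) (Fin (n+1)) ℂ := Lm z n * A * (Lm x n)ᵀ with hM
  have hdet : M.det = A.det := by
    rw [hM, det_mul, det_mul, Lm_det, det_transpose, Lm_det, one_mul, mul_one]
  -- entries of M
  have hM00 : M 0 0 = c := by
    rw [hM, mul_Rm_eq, Lm_mul_zero, transpose_apply, Lm_mul_zero]
    simp only [hA, of_apply, Fin.val_zero]
    rw [hcol]; simp
  have hM0j : ∀ j : Fin n, M 0 j.succ = 0 := by
    intro j
    rw [hM, mul_Rm_eq, Lm_mul_succ, transpose_apply, transpose_apply,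
      Lm_mul_zero, Lm_mul_zero]
    simp only [hA, of_apply, Fin.val_succ, Fin.coe_castSucc, Fin.val_zero]
    rw [hrow, hrow]
    ring
  have hMi0 : ∀ i : Fin n, M i.succ 0 = 0 := by
    intro i
    rw [hM, mul_Rm_eq, Lm_mul_zero, transpose_apply, Lm_mul_succ]
    simp only [hA, of_apply, Fin.val_succ, Fin.coe_castSucc, Fin.val_zero]
    rw [hcol, hcol]
    ring
  have hMij : ∀ i j : Fin n, M i.succ j.succ = (y + x * z) * P i j := by
    intro i j
    rw [hM, mul_Rm_eq, Lm_mul_succ, transpose_apply, transpose_apply,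
      Lm_mul_succ, Lm_mul_succ]
    simp only [hA, of_apply, Fin.val_succ, Fin.coe_castSucc]
    rw [hrec (i+1) (j+1) (by omega) (by omega)]
    simp only [Nat.add_sub_cancel]
    ring
  -- expand det M along the first column
  rw [← hdet, det_succ_column_zero]
  rw [Finset.sum_eq_single 0]
  · have hsub : M.submatrix (Fin.succAbove 0) Fin.succ =
        (y + x * z) • (Matrix.of fun i j : Fin n => P i j) := by
      ext i j
      simp only [submatrix_apply, Fin.succAbove_zero, Matrix.smul_apply, of_apply, smul_eq_mul]
      exact hMij i j
    rw [hsub, hM00, det_smul]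
    simp only [Fintype.card_fin, Fin.val_zero, pow_zero, one_mul]
  · intro i _ hi
    rcases Fin.eq_zero_or_eq_succ i with h | ⟨i', rfl⟩
    · exact absurd h hi
    · rw [hMi0 i']; ring
  · simp

theorem stmt_7 (n : ℕ) (x y z c : ℂ) (hxyz : y + x * z ≠ 0)
    (P : ℕ → ℕ → ℂ)
    (hcol : ∀ i, P i 0 = c * z ^ i) (hrow : ∀ j, P 0 j = c * x ^ j)
    (hrec : ∀ i j, 1 ≤ i → 1 ≤ j →
      P i j = x * P i (j - 1) + y * P (i - 1) (j - 1) + z * P (i - 1) j) :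
    (Matrix.of fun i j : Fin n => P i j).det = c ^ n * (y + x * z) ^ (n * (n - 1) / 2) := by
  induction n with
  | zero => simp
  | succ n ih =>
    rw [step_lemma n x y z c P hcol hrow hrec, ih]
    have h2 : (n + 1) * ((n + 1) - 1) = 2 * n + n * (n - 1) := by
      cases n with
      | zero => rfl
      | succ m => simp only [Nat.succ_sub_one]; ring
    have hn : (n + 1) * ((n + 1) - 1) / 2 = n + n * (n - 1) / 2 := by omega
    rw [hn, pow_add, pow_succ]
    ring
end

section
/- Let a, b ∈ ℂ and y ∈ ℂ with y ≠ −1, and let n ≥ 1. Let P be the n×n weighted recurrence matrix with parameters (1, y, 1), first column α_i = a^i, and first row β_j = b^j. Then det P = (1+y)^{(n-1)(n-2)/2} · (y + a + b − ab)^{n-1}. -/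
open Matrix

private lemma sumD_aux {m : ℕ} (i : Fin (m + 1)) (f : Fin (m + 1) → ℂ) :
    (∑ k : Fin (m + 1),
        (if (i : ℕ) = (k : ℕ) then (1 : ℂ) else if (k : ℕ) + 1 = (i : ℕ) then -1 else 0) * f k)
      = f i - (if (i : ℕ) = 0 then 0
          else f ⟨(i : ℕ) - 1, Nat.lt_of_le_of_lt (Nat.sub_le _ _) i.isLt⟩) := by
  by_cases h0 : (i : ℕ) = 0
  · have key : ∀ k : Fin (m + 1),
        (if (i : ℕ) = (k : ℕ) then (1 : ℂ) else if (k : ℕ) + 1 = (i : ℕ) then -1 else 0) * f k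
          = if k = i then f k else 0 := by
      intro k
      by_cases hk : k = i
      · subst hk; simp
      · have h1 : (i : ℕ) ≠ (k : ℕ) := fun h => hk (Fin.ext h.symm)
        have h2 : (k : ℕ) + 1 ≠ (i : ℕ) := by omega
        simp [h1, h2, hk]
    rw [Finset.sum_congr rfl fun k _ => key k, Finset.sum_ite_eq']
    simp [h0]
  · set p : Fin (m + 1) := ⟨(i : ℕ) - 1, Nat.lt_of_le_of_lt (Nat.sub_le _ _) i.isLt⟩ with hp
    have hpi : p ≠ i := by
      intro h
      have := congrArg Fin.val h
      simp [hp] at this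
      omega
    have key : ∀ k : Fin (m + 1),
        (if (i : ℕ) = (k : ℕ) then (1 : ℂ) else if (k : ℕ) + 1 = (i : ℕ) then -1 else 0) * f k
          = (if k = i then f k else 0) + (if k = p then -f k else 0) := by
      intro k
      by_cases hk : k = i
      · subst hk
        simp [hpi.symm, Ne.symm hpi]
      · by_cases hk' : k = p
        · subst hk'
          have h1 : (i : ℕ) ≠ (p : ℕ) := fun h => hpi (Fin.ext h.symm)
          have h2 : (p : ℕ) + 1 = (i : ℕ) := by simp [hp]; omega
          simp [h1, h2, hk]
        · have h1 : (i : ℕ) ≠ (k : ℕ) := fun h => hk (Fin.ext h.symm)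
          have h2 : (k : ℕ) + 1 ≠ (i : ℕ) := by
            intro h
            apply hk'
            apply Fin.ext
            simp [hp]; omega
          simp [h1, h2, hk, hk']
    rw [Finset.sum_congr rfl fun k _ => key k, Finset.sum_add_distrib,
      Finset.sum_ite_eq', Finset.sum_ite_eq']
    simp [h0]
    ring

private def eqv (m : ℕ) : Fin 1 ⊕ Fin (m + 1) ≃ Fin (m + 2) :=
  finSumFinEquiv.trans (finCongr (by omega))

private lemma eqv_inl (m : ℕ) (k : Fin 1) : ((eqv m) (Sum.inl k) : ℕ) = 0 := by
  simp [eqv, finSumFinEquiv_apply_left]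

private lemma eqv_inr (m : ℕ) (k : Fin (m + 1)) :
    ((eqv m) (Sum.inr k) : ℕ) = (k : ℕ) + 1 := by
  simp [eqv, finSumFinEquiv_apply_right]

private lemma tri_aux (m : ℕ) : (m + 1) * (m + 1 - 1) / 2 = m * (m - 1) / 2 + m := by
  have hdvd : 2 ∣ m * (m - 1) := by
    cases m with
    | zero => simp
    | succ k =>
      have h : Even (k * (k + 1)) := Nat.even_mul_succ_self k
      have h2 : (k + 1) * (k + 1 - 1) = k * (k + 1) := by
        simp [Nat.add_sub_cancel, Nat.mul_comm]
      rw [h2]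
      exact h.two_dvd
  have hrel : (m + 1) * (m + 1 - 1) = m * (m - 1) + 2 * m := by
    cases m with
    | zero => simp
    | succ k =>
      simp only [Nat.add_sub_cancel]
      ring
  obtain ⟨k, hk⟩ := hdvd
  omega

private lemma aux_key (a b y : ℂ) (P : ℕ → ℕ → ℂ)
    (hcol : ∀ i, P i 0 = a ^ i) (hrow : ∀ j, P 0 j = b ^ j)
    (hrec : ∀ i j, 1 ≤ i → 1 ≤ j →
      P i j = P i (j - 1) + y * P (i - 1) (j - 1) + P (i - 1) j) :
    ∀ m : ℕ, (Matrix.of fun i j : Fin (m + 1) => P i j).det =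
      (1 + y) ^ (m * (m - 1) / 2) * (y + a + b - a * b) ^ m := by
  intro m
  induction m with
  | zero =>
    simp [Matrix.det_fin_one, hrow 0]
  | succ m ih =>
    set s : ℂ := y + a + b - a * b with hs
    set M : Matrix (Fin (m + 2)) (Fin (m + 2)) ℂ := Matrix.of fun i j : Fin (m + 2) => P i j
      with hM
    set D : Matrix (Fin (m + 2)) (Fin (m + 2)) ℂ := Matrix.of fun i j =>
      if (i : ℕ) = (j : ℕ) then 1 else if (j : ℕ) + 1 = (i : ℕ) then -1 else 0 with hD
    have hDdet : D.det = 1 := by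
      rw [Matrix.det_of_lowerTriangular D ?_]
      · apply Finset.prod_eq_one
        intro i _
        simp [hD]
      · intro i j hij
        have hlt : (i : ℕ) < (j : ℕ) := hij
        have h1 : (i : ℕ) ≠ (j : ℕ) := by omega
        have h2 : (j : ℕ) + 1 ≠ (i : ℕ) := by omega
        simp [hD, h1, h2]
    have hDM : ∀ i j : Fin (m + 2), (D * M) i j
        = P i j - (if (i : ℕ) = 0 then 0 else P ((i : ℕ) - 1) j) := by
      intro i j
      rw [Matrix.mul_apply]
      have := sumD_aux i (fun k : Fin (m + 2) => P k j)
      simpa [hD, hM] using this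
    have hN : ∀ i j : Fin (m + 2), (D * M * Dᵀ) i j
        = (P i j - (if (i : ℕ) = 0 then 0 else P ((i : ℕ) - 1) j))
          - (if (j : ℕ) = 0 then 0
            else P i ((j : ℕ) - 1) - (if (i : ℕ) = 0 then 0 else P ((i : ℕ) - 1) ((j : ℕ) - 1))) := by
      intro i j
      rw [Matrix.mul_apply]
      have hcom : ∀ k : Fin (m + 2), (D * M) i k * Dᵀ k j = D j k * (D * M) i k := by
        intro k
        rw [Matrix.transpose_apply, mul_comm]
      rw [Finset.sum_congr rfl fun k _ => hcom k]
      have := sumD_aux j (fun k : Fin (m + 2) => (D * M) i k)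
      rw [show (∑ k : Fin (m + 2), D j k * (D * M) i k)
          = ∑ k : Fin (m + 2),
            (if (j : ℕ) = (k : ℕ) then (1:ℂ) else if (k : ℕ) + 1 = (j : ℕ) then -1 else 0)
              * (D * M) i k from Finset.sum_congr rfl fun k _ => by simp [hD], this]
      rw [hDM]
      congr 1
      by_cases hj : (j : ℕ) = 0
      · simp [hj]
      · simp only [hj, if_false]
        rw [hDM]
    set g : ℕ → ℕ → ℂ := fun i j =>
      if i = 0 then (if j = 0 then 1 else b ^ (j - 1) * (b - 1))
      else if j = 0 then a ^ (i - 1) * (a - 1)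
      else (1 + y) * P (i - 1) (j - 1) with hg
    have hNg : D * M * Dᵀ = Matrix.of fun i j : Fin (m + 2) => g (i : ℕ) (j : ℕ) := by
      ext i j
      rw [hN i j]
      simp only [Matrix.of_apply, hg]
      by_cases hi : (i : ℕ) = 0
      · by_cases hj : (j : ℕ) = 0
        · simp [hi, hj, hrow]
        · simp only [hi, hj, if_true, if_false]
          rw [hrow, hrow]
          have hpw : b ^ (j : ℕ) = b ^ ((j : ℕ) - 1) * b := by
            rw [← pow_succ]
            congr 1
            omega
          rw [hpw]
          ring
      · by_cases hj : (j : ℕ) = 0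
        · simp only [hi, hj, if_true, if_false]
          rw [hcol, hcol]
          have hpw : a ^ (i : ℕ) = a ^ ((i : ℕ) - 1) * a := by
            rw [← pow_succ]
            congr 1
            omega
          rw [hpw]
          ring
        · simp only [hi, hj, if_false]
          rw [hrec (i : ℕ) (j : ℕ) (by omega) (by omega)]
          ring
    have hdetM : M.det = (Matrix.of fun i j : Fin (m + 2) => g (i : ℕ) (j : ℕ)).det := by
      rw [← hNg, Matrix.det_mul, Matrix.det_mul, hDdet, Matrix.det_transpose, hDdet]
      ring
    set B2 : Matrix (Fin 1) (Fin (m + 1)) ℂ := Matrix.of fun _ j => b ^ (j : ℕ) * (b - 1) with hB2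
    set C2 : Matrix (Fin (m + 1)) (Fin 1) ℂ := Matrix.of fun i _ => a ^ (i : ℕ) * (a - 1) with hC2
    set D2 : Matrix (Fin (m + 1)) (Fin (m + 1)) ℂ := Matrix.of fun i j => (1 + y) * P i j with hD2
    have hblock : (Matrix.of fun i j : Fin (m + 2) => g (i : ℕ) (j : ℕ)).submatrix (eqv m) (eqv m)
        = Matrix.fromBlocks 1 B2 C2 D2 := by
      ext i j
      rcases i with i | i <;> rcases j with j | j
      · rw [Matrix.submatrix_apply, Matrix.of_apply, eqv_inl, eqv_inl,
          Matrix.fromBlocks_apply₁₁]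
        have : i = j := Subsingleton.elim i j
        subst this
        simp [hg]
      · rw [Matrix.submatrix_apply, Matrix.of_apply, eqv_inl, eqv_inr,
          Matrix.fromBlocks_apply₁₂]
        simp [hg, hB2]
      · rw [Matrix.submatrix_apply, Matrix.of_apply, eqv_inr, eqv_inl,
          Matrix.fromBlocks_apply₂₁]
        simp [hg, hC2]
      · rw [Matrix.submatrix_apply, Matrix.of_apply, eqv_inr, eqv_inr,
          Matrix.fromBlocks_apply₂₂]
        simp [hg, hD2]
    have hdet2 : (Matrix.of fun i j : Fin (m + 2) => g (i : ℕ) (j : ℕ)).det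
        = (D2 - C2 * B2).det := by
      rw [← Matrix.det_submatrix_equiv_self (eqv m), hblock, Matrix.det_fromBlocks_one₁₁]
    set K : Matrix (Fin (m + 1)) (Fin (m + 1)) ℂ := Matrix.of fun i j =>
      (if i = j then 1 + y else 0) - (if (i : ℕ) = 0 then (a - 1) * (b - 1) * b ^ (j : ℕ) else 0)
      with hK
    have hfact : D2 - C2 * B2 = (Matrix.of fun i j : Fin (m + 1) => P i j) * K := by
      ext i j
      rw [Matrix.sub_apply, Matrix.mul_apply, Matrix.mul_apply]
      have key : ∀ k : Fin (m + 1),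
          (Matrix.of fun i j : Fin (m + 1) => P (i : ℕ) (j : ℕ)) i k * K k j
            = (if k = j then P i k * (1 + y) else 0)
              - (if k = 0 then P i k * ((a - 1) * (b - 1) * b ^ (j : ℕ)) else 0) := by
        intro k
        simp only [hK, Matrix.of_apply]
        rw [mul_sub]
        congr 1
        · rw [mul_ite, mul_zero]
        · by_cases hk : k = (0 : Fin (m + 1))
          · subst hk; simp
          · have hk' : (k : ℕ) ≠ 0 := by intro h; exact hk (Fin.ext (by simp [h]))
            simp [hk, hk']
      rw [Finset.sum_congr rfl fun k _ => key k, Finset.sum_sub_distrib,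
        Finset.sum_ite_eq', Finset.sum_ite_eq']
      simp only [Finset.mem_univ, if_true, Matrix.of_apply, Fin.val_zero, hD2, hC2, hB2]
      rw [hcol, Fin.sum_univ_one]
      ring
    have hKtri : K.det = s * (1 + y) ^ m := by
      have htri : K.BlockTriangular id := by
        intro i j hij
        have hlt : (j : ℕ) < (i : ℕ) := hij
        have h1 : i ≠ j := by
          intro h; subst h; exact lt_irrefl _ hlt
        have h2 : (i : ℕ) ≠ 0 := by omega
        simp [hK, h1, h2, show i ≠ 0 from fun h => h2 (by simp [h])]
      rw [Matrix.det_of_upperTriangular htri, Fin.prod_univ_succ]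
      have h0 : K 0 0 = s := by
        simp [hK, hs]
        ring
      have hsucc : ∀ i : Fin m, K i.succ i.succ = 1 + y := by
        intro i
        simp [hK]
      rw [h0, Finset.prod_congr rfl fun i _ => hsucc i, Finset.prod_const,
        Finset.card_univ, Fintype.card_fin]
    rw [hdetM, hdet2, hfact, Matrix.det_mul, ih, hKtri, tri_aux, pow_add]
    ring

theorem stmt_10 (n : ℕ) (hn : 1 ≤ n) (a b y : ℂ) (hy : y ≠ -1)
    (P : ℕ → ℕ → ℂ)
    (hcol : ∀ i, P i 0 = a ^ i) (hrow : ∀ j, P 0 j = b ^ j)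
    (hrec : ∀ i j, 1 ≤ i → 1 ≤ j →
      P i j = P i (j - 1) + y * P (i - 1) (j - 1) + P (i - 1) j) :
    (Matrix.of fun i j : Fin n => P i j).det =
      (1 + y) ^ ((n - 1) * (n - 2) / 2) * (y + a + b - a * b) ^ (n - 1) := by
  obtain ⟨m, rfl⟩ : ∃ m, n = m + 1 := ⟨n - 1, by omega⟩
  rw [aux_key a b y P hcol hrow hrec m]
  rfl
end

section
/- For r, s ∈ ℂ, the determinant of the n×n Toeplitz matrix T with T_{i,j} = r^{i-j} for i ≥ j, T_{i,j} = s^{j-i} for i < j, and T_{i,i} = 1, equals (1 − rs)^{n-1}. -/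
open Matrix

theorem stmt_11 (n : ℕ) (r s : ℂ) :
    (Matrix.of fun i j : Fin n =>
        if (j : ℕ) ≤ (i : ℕ) then r ^ ((i : ℕ) - (j : ℕ)) else s ^ ((j : ℕ) - (i : ℕ))).det =
      (1 - r * s) ^ (n - 1) := by
  cases n with
  | zero => simp
  | succ m =>
    set A : Matrix (Fin (m+1)) (Fin (m+1)) ℂ :=
      Matrix.of fun i j : Fin (m+1) =>
        if (j : ℕ) ≤ (i : ℕ) then r ^ ((i : ℕ) - (j : ℕ)) else s ^ ((j : ℕ) - (i : ℕ)) with hA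
    set L : Matrix (Fin (m+1)) (Fin (m+1)) ℂ :=
      Matrix.of (fun i k : Fin (m+1) =>
        if k = i then (1:ℂ) else if (k : ℕ) + 1 = (i : ℕ) then -r else 0) with hL
    have hLA : ∀ i j : Fin (m+1), (L * A) i j =
        if (i : ℕ) = 0 then A i j
        else A i j - r * A ⟨(i : ℕ) - 1, lt_of_le_of_lt (Nat.sub_le _ _) i.isLt⟩ j := by
      intro i j
      rw [Matrix.mul_apply]
      have hsplit : ∀ k : Fin (m+1), L i k * A k j =
          (if k = i then A k j else 0) +
          (if (k : ℕ) + 1 = (i : ℕ) then -r * A k j else 0) := by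
        intro k
        by_cases h : k = i
        · subst h; simp [hL]
        · simp only [hL, Matrix.of_apply, if_neg h]
          by_cases h2 : (k : ℕ) + 1 = (i : ℕ) <;> simp [h2]
      simp only [hsplit, Finset.sum_add_distrib]
      rw [Finset.sum_ite_eq' Finset.univ i (fun k => A k j)]
      simp only [Finset.mem_univ, if_true]
      by_cases h0 : (i : ℕ) = 0
      · rw [if_pos h0]
        have h2 : ∀ k ∈ (Finset.univ : Finset (Fin (m+1))), (if (k : ℕ) + 1 = (i : ℕ) then -r * A k j else 0) = 0 := by
          intro k _; rw [if_neg]; omega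
        rw [Finset.sum_eq_zero h2, add_zero]
      · rw [if_neg h0]
        set p : Fin (m+1) := ⟨(i : ℕ) - 1, lt_of_le_of_lt (Nat.sub_le _ _) i.isLt⟩ with hp
        have heq : ∀ k : Fin (m+1), ((k : ℕ) + 1 = (i : ℕ)) ↔ k = p := by
          intro k
          rw [Fin.ext_iff]
          simp only [hp]
          omega
        simp only [heq]
        rw [Finset.sum_ite_eq' Finset.univ p (fun k => -r * A k j)]
        simp only [Finset.mem_univ, if_true]
        ring
    have hdetL : L.det = 1 := by
      have hlow : ∀ i j : Fin (m+1), i < j → L i j = 0 := by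
        intro i j hij
        have hij' : (i : ℕ) < (j : ℕ) := hij
        simp only [hL, Matrix.of_apply]
        rw [if_neg (by rw [Fin.ext_iff]; omega), if_neg (by omega)]
      rw [Matrix.det_of_lowerTriangular L (fun i j h => hlow i j h)]
      apply Finset.prod_eq_one
      intro i _
      simp [hL]
    have hup : ∀ i j : Fin (m+1), j < i → (L * A) i j = 0 := by
      intro i j hij
      have hij' : (j : ℕ) < (i : ℕ) := hij
      rw [hLA]
      rw [if_neg (by omega)]
      simp only [hA, Matrix.of_apply]
      rw [if_pos (by omega), if_pos (by omega : (j : ℕ) ≤ (i : ℕ) - 1)]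
      have h1 : (i : ℕ) - (j : ℕ) = ((i : ℕ) - 1 - (j : ℕ)) + 1 := by omega
      rw [h1, pow_succ]
      ring
    have hdiag : ∀ i : Fin (m+1), (L * A) i i =
        if (i : ℕ) = 0 then 1 else 1 - r * s := by
      intro i
      rw [hLA]
      by_cases h0 : (i : ℕ) = 0
      · rw [if_pos h0, if_pos h0]
        simp [hA]
      · rw [if_neg h0, if_neg h0]
        simp only [hA, Matrix.of_apply]
        rw [if_pos (le_refl _), if_neg (by omega : ¬ (i : ℕ) ≤ (i : ℕ) - 1)]
        have h1 : (i : ℕ) - ((i : ℕ) - 1) = 1 := by omega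
        rw [h1, Nat.sub_self, pow_zero, pow_one]
    have key : (L * A).det = (1 - r * s) ^ m := by
      rw [Matrix.det_of_upperTriangular (fun i j h => hup i j h)]
      have : ∀ i : Fin (m+1), (L * A) i i = if (i : ℕ) = 0 then 1 else 1 - r * s := hdiag
      simp only [this]
      rw [Fin.prod_univ_succ]
      simp
    rw [Matrix.det_mul, hdetL, one_mul] at key
    simpa using key
end

section
/- Let y ∈ ℂ with y ≠ −1 and let n ≥ 1. Let P be the 2n×2n weighted recurrence matrix with parameters (1, y, 1), first column α_i = i, and first row β_j = −j. Then det P = (1+y)^{2n(n-1)}. -/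
open Matrix Finset
namespace Stmt12Aux



/-- coefficient `C(i,k+1)C(j,k) - C(i,k)C(j,k+1)` -/
noncomputable def g (i j k : ℕ) : ℂ :=
  (i.choose (k+1) : ℂ) * (j.choose k : ℂ) - (i.choose k : ℂ) * (j.choose (k+1) : ℂ)

lemma g_zero_left {i j k : ℕ} (h : i < k) : g i j k = 0 := by
  simp [g, Nat.choose_eq_zero_of_lt h, Nat.choose_eq_zero_of_lt (h.trans k.lt_succ_self)]

lemma g_zero_right {i j k : ℕ} (h : j < k) : g i j k = 0 := by
  simp [g, Nat.choose_eq_zero_of_lt h, Nat.choose_eq_zero_of_lt (h.trans k.lt_succ_self)]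

lemma g_pascal (i j k : ℕ) :
    g (i+1) (j+1) (k+1) = g (i+1) j (k+1) + g i (j+1) (k+1) + g i j k - g i j (k+1) := by
  simp only [g, Nat.choose_succ_succ]
  push_cast
  ring

lemma g_pascal_zero (i j : ℕ) :
    g (i+1) (j+1) 0 = g (i+1) j 0 + g i (j+1) 0 - g i j 0 := by
  simp only [g, Nat.choose_succ_succ, Nat.choose_zero_right, Nat.choose_one_right]
  push_cast
  ring

noncomputable def f (u : ℂ) (i j : ℕ) : ℂ := ∑ k ∈ range (i+j+1), g i j k * u^k

lemma f_eq_sum (u : ℂ) (i j N : ℕ) (h : i < N) :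
    ∑ k ∈ range N, g i j k * u^k = f u i j := by
  have h1 : ∀ M : ℕ, N ≤ M → ∑ k ∈ range M, g i j k * u^k = ∑ k ∈ range N, g i j k * u^k := by
    intro M hM
    refine (Finset.sum_subset (Finset.range_subset_range.2 hM) ?_).symm
    intro k _ hk
    rw [Finset.mem_range, not_lt] at hk
    rw [g_zero_left (lt_of_lt_of_le h hk), zero_mul]
  have h2 : ∀ M : ℕ, i + j + 1 ≤ M →
      ∑ k ∈ range M, g i j k * u^k = f u i j := by
    intro M hM
    refine Finset.sum_subset (Finset.range_subset_range.2 hM) ?_ |>.symm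
    intro k _ hk
    rw [Finset.mem_range, not_lt] at hk
    rw [g_zero_left (by omega), zero_mul]
  rw [← h1 (N + (i+j+1)) (by omega), h2 (N + (i+j+1)) (by omega)]

lemma f_rec (u : ℂ) (i j : ℕ) :
    f u (i+1) (j+1) = f u (i+1) j + (u - 1) * f u i j + f u i (j+1) := by
  set M := i + j + 2 with hM
  rw [← f_eq_sum u (i+1) (j+1) (M+1) (by omega), ← f_eq_sum u (i+1) j (M+1) (by omega),
    ← f_eq_sum u i j (M+1) (by omega), ← f_eq_sum u i (j+1) (M+1) (by omega)]
  have hshift : (u - 1) * ∑ k ∈ range (M+1), g i j k * u^k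
      = (∑ k ∈ range (M+1), g i j k * u^(k+1)) - ∑ k ∈ range (M+1), g i j k * u^k := by
    rw [sub_mul, one_mul, Finset.mul_sum]
    congr 1
    exact Finset.sum_congr rfl fun k _ => by ring
  rw [hshift]
  rw [Finset.sum_range_succ (fun k => g i j k * u^(k+1)) M,
    g_zero_left (show i < M by omega), zero_mul, add_zero]
  rw [Finset.sum_range_succ' (fun k => g (i+1) (j+1) k * u^k) M,
    Finset.sum_range_succ' (fun k => g (i+1) j k * u^k) M,
    Finset.sum_range_succ' (fun k => g i j k * u^k) M,
    Finset.sum_range_succ' (fun k => g i (j+1) k * u^k) M]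
  have key : ∑ k ∈ range M, g (i+1) (j+1) (k+1) * u^(k+1)
      = ∑ k ∈ range M, (g (i+1) j (k+1) * u^(k+1) + g i (j+1) (k+1) * u^(k+1)
          + g i j k * u^(k+1) - g i j (k+1) * u^(k+1)) := by
    refine Finset.sum_congr rfl fun k _ => ?_
    rw [g_pascal]; ring
  rw [key, g_pascal_zero]
  rw [Finset.sum_sub_distrib, Finset.sum_add_distrib, Finset.sum_add_distrib]
  ring



noncomputable def t (u : ℂ) (s i j : ℕ) : ℂ :=
  if i + 1 = j then -u^(s+i) else if j + 1 = i then u^(s+j) else 0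

lemma t_split (u : ℂ) (s i j : ℕ) :
    t u s i j = (if i+1 = j then -u^(s+i) else 0) + (if j+1 = i then u^(s+j) else 0) := by
  unfold t
  split_ifs with h1 h2 <;> first | omega | ring

lemma detT (u : ℂ) : ∀ m s : ℕ,
    (Matrix.of fun i j : Fin (2*m) => t u s i.1 j.1).det = u ^ (2*s*m + 2*m*(m-1)) := by
  intro m
  induction m with
  | zero => intro s; simp [Matrix.det_isEmpty]
  | succ m ih =>
    intro s
    show (Matrix.of fun i j : Fin (2*m+1+1) => t u s i.1 j.1).det = _
    set A : Matrix (Fin (2*m+1+1)) (Fin (2*m+1+1)) ℂ :=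
      Matrix.of fun i j : Fin (2*m+1+1) => t u s i.1 j.1 with hA
    rw [Matrix.det_succ_row_zero]
    rw [Finset.sum_eq_single (1 : Fin (2*m+1+1))]
    · have hA01 : A 0 (1 : Fin (2*m+1+1)) = -u^s := by
        simp [hA, t, Fin.val_one]
      rw [hA01, Fin.val_one, pow_one]
      set B := A.submatrix Fin.succ ((1 : Fin (2*m+1+1)).succAbove) with hB
      rw [Matrix.det_succ_column_zero]
      rw [Finset.sum_eq_single (0 : Fin (2*m+1))]
      · have hB00 : B 0 0 = u^s := by
          have h10 : ((1 : Fin (2*m+1+1)).succAbove 0) = 0 := by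
            rw [Fin.succAbove_of_castSucc_lt]
            · rfl
            · simp [Fin.lt_iff_val_lt_val, Fin.val_one]
          simp only [hB, Matrix.submatrix_apply, h10, hA, Matrix.of_apply]
          show t u s (0+1) 0 = u^s
          unfold t
          rw [if_neg (by omega), if_pos (by omega), Nat.add_zero]
        rw [hB00, Fin.val_zero, pow_zero]
        have hsub : B.submatrix (Fin.succAbove 0) Fin.succ
            = Matrix.of fun i j : Fin (2*m) => t u (s+2) i.1 j.1 := by
          ext k l
          have hrow : ((0 : Fin (2*m+1)).succAbove k) = k.succ := by
            rw [Fin.succAbove_of_le_castSucc]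
            exact Fin.zero_le _
          have hcol : ((1 : Fin (2*m+1+1)).succAbove l.succ) = l.succ.succ := by
            rw [Fin.succAbove_of_le_castSucc]
            simp [Fin.le_iff_val_le_val, Fin.val_one]
          simp only [Matrix.submatrix_apply, hrow, hB, hcol, hA, Matrix.of_apply]
          show t u s (k.1+1+1) (l.1+1+1) = t u (s+2) k.1 l.1
          unfold t
          have e1 : (k.1+1+1+1 = l.1+1+1) ↔ (k.1+1 = l.1) := by omega
          have e2 : (l.1+1+1+1 = k.1+1+1) ↔ (l.1+1 = k.1) := by omega
          have e3 : s + (k.1+1+1) = s+2+k.1 := by omega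
          have e4 : s + (l.1+1+1) = s+2+l.1 := by omega
          simp only [e1, e2, e3, e4]
        rw [hsub, ih (s+2)]
        have hexp : s + (s + (2*(s+2)*m + 2*m*(m-1))) = 2*s*(m+1) + 2*(m+1)*(m+1-1) := by
          cases m with
          | zero => ring_nf
          | succ m' => simp only [Nat.add_sub_cancel]; ring
        rw [← hexp, pow_add, pow_add]
        ring
      · intro b _ hb
        have hBb0 : B b 0 = 0 := by
          have h10 : ((1 : Fin (2*m+1+1)).succAbove 0) = 0 := by
            rw [Fin.succAbove_of_castSucc_lt]
            · rfl
            · simp [Fin.lt_iff_val_lt_val, Fin.val_one]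
          have hbv : b.1 ≠ 0 := fun h => hb (Fin.ext h)
          simp only [hB, Matrix.submatrix_apply, h10, hA, Matrix.of_apply]
          show t u s (b.1+1) 0 = 0
          unfold t
          rw [if_neg (by omega), if_neg (by omega)]
        rw [hBb0]; ring
      · intro h; exact absurd (Finset.mem_univ _) h
    · intro b _ hb
      have hA0b : A 0 b = 0 := by
        have hbv : b.1 ≠ 1 := fun h => hb (Fin.ext (by simp [h, Fin.val_one]))
        simp only [hA, Matrix.of_apply]
        show t u s 0 b.1 = 0
        unfold t
        rw [if_neg (by omega), if_neg (by omega)]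
      rw [hA0b]; ring
    · intro h; exact absurd (Finset.mem_univ _) h



lemma mul_entry (u : ℂ) (m : ℕ) (i j : Fin m) :
    ((Matrix.of fun a b : Fin m => ((a.1.choose b.1 : ℕ) : ℂ)) *
     (Matrix.of fun a b : Fin m => t u 0 a.1 b.1) *
     (Matrix.of fun a b : Fin m => ((a.1.choose b.1 : ℕ) : ℂ))ᵀ) i j = f u i.1 j.1 := by
  simp only [Matrix.mul_apply, Matrix.transpose_apply, Matrix.of_apply]
  rw [Fin.sum_univ_eq_sum_range
    (fun l => (∑ k : Fin m, ((i.1.choose k.1 : ℕ) : ℂ) * t u 0 k.1 l) * ((j.1.choose l : ℕ) : ℂ)) m]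
  have hinner : ∀ l : ℕ, (∑ k : Fin m, ((i.1.choose k.1 : ℕ) : ℂ) * t u 0 k.1 l)
      = ∑ k ∈ range m, ((i.1.choose k : ℕ) : ℂ) * t u 0 k l :=
    fun l => Fin.sum_univ_eq_sum_range (fun k => ((i.1.choose k : ℕ) : ℂ) * t u 0 k l) m
  simp only [hinner]
  have step1 : ∑ l ∈ range m, (∑ k ∈ range m, ((i.1.choose k : ℕ) : ℂ) * t u 0 k l)
        * ((j.1.choose l : ℕ) : ℂ)
      = (∑ l ∈ range m, ∑ k ∈ range m,
          (if k+1 = l then ((i.1.choose k : ℕ) : ℂ) * (-u^k) * ((j.1.choose l : ℕ) : ℂ) else 0))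
        + (∑ l ∈ range m, ∑ k ∈ range m,
          (if l+1 = k then ((i.1.choose k : ℕ) : ℂ) * (u^l) * ((j.1.choose l : ℕ) : ℂ) else 0)) := by
    rw [← Finset.sum_add_distrib]
    refine Finset.sum_congr rfl fun l _ => ?_
    rw [Finset.sum_mul, ← Finset.sum_add_distrib]
    refine Finset.sum_congr rfl fun k _ => ?_
    rw [t_split]
    simp only [Nat.zero_add]
    split_ifs with h1 h2 <;> first | omega | ring
  rw [step1]
  have pieceA : ∑ l ∈ range m, ∑ k ∈ range m,
        (if k+1 = l then ((i.1.choose k : ℕ) : ℂ) * (-u^k) * ((j.1.choose l : ℕ) : ℂ) else 0)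
      = ∑ k ∈ range m, ((i.1.choose k : ℕ) : ℂ) * (-u^k) * ((j.1.choose (k+1) : ℕ) : ℂ) := by
    rw [Finset.sum_comm]
    refine Finset.sum_congr rfl fun k _ => ?_
    rw [Finset.sum_ite_eq (range m) (k+1)
      (fun l => ((i.1.choose k : ℕ) : ℂ) * (-u^k) * ((j.1.choose l : ℕ) : ℂ))]
    split_ifs with h
    · rfl
    · rw [Finset.mem_range, not_lt] at h
      rw [Nat.choose_eq_zero_of_lt (lt_of_lt_of_le j.2 h)]
      push_cast; ring
  have pieceB : ∑ l ∈ range m, ∑ k ∈ range m,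
        (if l+1 = k then ((i.1.choose k : ℕ) : ℂ) * (u^l) * ((j.1.choose l : ℕ) : ℂ) else 0)
      = ∑ l ∈ range m, ((i.1.choose (l+1) : ℕ) : ℂ) * (u^l) * ((j.1.choose l : ℕ) : ℂ) := by
    refine Finset.sum_congr rfl fun l _ => ?_
    rw [Finset.sum_ite_eq (range m) (l+1)
      (fun k => ((i.1.choose k : ℕ) : ℂ) * (u^l) * ((j.1.choose l : ℕ) : ℂ))]
    split_ifs with h
    · rfl
    · rw [Finset.mem_range, not_lt] at h
      rw [Nat.choose_eq_zero_of_lt (lt_of_lt_of_le i.2 h)]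
      push_cast; ring
  rw [pieceA, pieceB, ← Finset.sum_add_distrib]
  rw [← f_eq_sum u i.1 j.1 m i.2]
  refine Finset.sum_congr rfl fun k _ => ?_
  unfold g
  ring

lemma detB (m : ℕ) : (Matrix.of fun a b : Fin m => ((a.1.choose b.1 : ℕ) : ℂ)).det = 1 := by
  rw [Matrix.det_of_lowerTriangular]
  · rw [Finset.prod_congr rfl (fun a _ => by simp [Nat.choose_self] :
      ∀ a ∈ Finset.univ, (Matrix.of fun a b : Fin m => ((a.1.choose b.1 : ℕ) : ℂ)) a a = 1)]
    simp
  · intro a b hab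
    have : a.1 < b.1 := hab
    simp [Nat.choose_eq_zero_of_lt this]

end Stmt12Aux

open Stmt12Aux in
theorem stmt_12 (n : ℕ) (hn : 1 ≤ n) (y : ℂ) (hy : y ≠ -1)
    (P : ℕ → ℕ → ℂ)
    (hcol : ∀ i, P i 0 = (i : ℂ)) (hrow : ∀ j, P 0 j = -(j : ℂ))
    (hrec : ∀ i j, 1 ≤ i → 1 ≤ j →
      P i j = P i (j - 1) + y * P (i - 1) (j - 1) + P (i - 1) j) :
    (Matrix.of fun i j : Fin (2 * n) => P i j).det = (1 + y) ^ (2 * n * (n - 1)) := by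
  have hP : ∀ i j : ℕ, P i j = f (1+y) i j := by
    intro i
    induction i with
    | zero =>
      intro j
      rw [hrow]
      unfold f
      rw [Nat.zero_add, Finset.sum_range_succ' (fun k => g 0 j k * (1+y)^k) j]
      rw [Finset.sum_congr rfl (fun k _ => by
        rw [g_zero_left (Nat.succ_pos k), zero_mul] :
        ∀ k ∈ range j, g 0 j (k+1) * (1+y)^(k+1) = 0)]
      simp [g, Nat.choose_one_right]
    | succ i ih =>
      intro j
      induction j with
      | zero =>
        rw [hcol]
        unfold f
        rw [Nat.add_zero, Finset.sum_range_succ' (fun k => g (i+1) 0 k * (1+y)^k) (i+1)]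
        rw [Finset.sum_congr rfl (fun k _ => by
          rw [g_zero_right (Nat.succ_pos k), zero_mul] :
          ∀ k ∈ range (i+1), g (i+1) 0 (k+1) * (1+y)^(k+1) = 0)]
        simp [g, Nat.choose_one_right]
      | succ j ihj =>
        rw [hrec (i+1) (j+1) (by omega) (by omega)]
        simp only [Nat.add_sub_cancel]
        rw [ih j, ih (j+1), ihj, f_rec]
        ring
  have hmat : (Matrix.of fun i j : Fin (2 * n) => P i j)
      = (Matrix.of fun a b : Fin (2*n) => ((a.1.choose b.1 : ℕ) : ℂ)) *
        (Matrix.of fun a b : Fin (2*n) => t (1+y) 0 a.1 b.1) *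
        (Matrix.of fun a b : Fin (2*n) => ((a.1.choose b.1 : ℕ) : ℂ))ᵀ := by
    ext i j
    rw [mul_entry, Matrix.of_apply, hP]
  rw [hmat, Matrix.det_mul, Matrix.det_mul, detB, Matrix.det_transpose, detB,
    one_mul, mul_one, detT]
  norm_num
end

section
/- Let a, b ∈ ℂ with ab ≠ 0, and let P be the n×n weighted recurrence matrix with parameters (b, ab, a), first column α_i = a^i, and first row β_j = b^j. Then P = L · Rᵗ where L_{i,j} = C(i,j) a^{i-j} and R_{i,j} = C(i,j) (2ab)^j b^{i-j}; in particular det P = (2ab)^{n(n-1)/2}. -/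
open Matrix

section Aux
open Finset
open Finset Matrix

noncomputable def Tdel (i j : ℕ) : ℂ := ∑ k ∈ range (i+1), 2^k * (i.choose k) * (j.choose k)
noncomputable def Udel (i j : ℕ) : ℂ := ∑ k ∈ range (i+1), 2^k * (i.choose k) * (j.choose (k+1))
noncomputable def Vdel (i j : ℕ) : ℂ := ∑ k ∈ range (i+1), 2^k * (i.choose (k+1)) * (j.choose k)

lemma Adel (i j : ℕ) :
    ∑ k ∈ range (i+1), (2:ℂ)^(k+1) * (i.choose (k+1)) * (j.choose (k+1)) = Tdel i j - 1 := by
  have h1 := Finset.sum_range_succ' (fun k => (2:ℂ)^k * (i.choose k) * (j.choose k)) (i+1)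
  have h2 := Finset.sum_range_succ (fun k => (2:ℂ)^k * (i.choose k) * (j.choose k)) (i+1)
  simp only [Nat.choose_succ_self, Nat.cast_zero, mul_zero, zero_mul, add_zero,
    Nat.choose_zero_right, Nat.cast_one, pow_zero, mul_one, one_mul] at h1 h2
  rw [Tdel]
  rw [h2] at h1
  linear_combination -h1

lemma l2 (i j : ℕ) : Tdel (i+1) j = Tdel i j + 2 * Udel i j := by
  rw [show Tdel (i+1) j = ∑ k ∈ range (i+2), (2:ℂ)^k * ((i+1).choose k) * (j.choose k) from rfl]
  rw [Finset.sum_range_succ' (fun k => (2:ℂ)^k * ((i+1).choose k) * (j.choose k)) (i+1)]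
  have : ∀ k ∈ range (i+1), (2:ℂ)^(k+1) * ((i+1).choose (k+1)) * (j.choose (k+1))
      = 2 * (2^k * (i.choose k) * (j.choose (k+1)))
        + 2^(k+1) * (i.choose (k+1)) * (j.choose (k+1)) := by
    intro k _
    rw [Nat.choose_succ_succ]
    push_cast
    ring
  rw [Finset.sum_congr rfl this, Finset.sum_add_distrib, ← Finset.mul_sum, Adel]
  simp [Udel]
  ring

lemma l3 (i j : ℕ) : Tdel i (j+1) = Tdel i j + 2 * Vdel i j := by
  rw [show Tdel i (j+1) = ∑ k ∈ range (i+1), (2:ℂ)^k * (i.choose k) * ((j+1).choose k) from rfl]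
  rw [Finset.sum_range_succ' (fun k => (2:ℂ)^k * (i.choose k) * ((j+1).choose k)) i]
  have : ∀ k ∈ range i, (2:ℂ)^(k+1) * (i.choose (k+1)) * ((j+1).choose (k+1))
      = 2 * (2^k * (i.choose (k+1)) * (j.choose k))
        + 2^(k+1) * (i.choose (k+1)) * (j.choose (k+1)) := by
    intro k _
    rw [Nat.choose_succ_succ]
    push_cast
    ring
  rw [Finset.sum_congr rfl this, Finset.sum_add_distrib, ← Finset.mul_sum]
  have hV : ∑ k ∈ range i, (2:ℂ)^k * (i.choose (k+1)) * (j.choose k) = Vdel i j := by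
    rw [Vdel, Finset.sum_range_succ]
    simp [Nat.choose_succ_self]
  have hA : ∑ k ∈ range i, (2:ℂ)^(k+1) * (i.choose (k+1)) * (j.choose (k+1)) = Tdel i j - 1 := by
    rw [← Adel i j, Finset.sum_range_succ]
    simp [Nat.choose_succ_self]
  rw [hV, hA]
  simp
  ring

lemma l1 (i j : ℕ) : Tdel (i+1) (j+1) = 3 * Tdel i j + 2 * Udel i j + 2 * Vdel i j := by
  rw [show Tdel (i+1) (j+1) = ∑ k ∈ range (i+2), (2:ℂ)^k * ((i+1).choose k) * ((j+1).choose k) from rfl]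
  rw [Finset.sum_range_succ' (fun k => (2:ℂ)^k * ((i+1).choose k) * ((j+1).choose k)) (i+1)]
  have : ∀ k ∈ range (i+1), (2:ℂ)^(k+1) * ((i+1).choose (k+1)) * ((j+1).choose (k+1))
      = 2 * (2^k * (i.choose k) * (j.choose k))
        + 2 * (2^k * (i.choose k) * (j.choose (k+1)))
        + 2 * (2^k * (i.choose (k+1)) * (j.choose k))
        + 2^(k+1) * (i.choose (k+1)) * (j.choose (k+1)) := by
    intro k _
    rw [Nat.choose_succ_succ, Nat.choose_succ_succ j]
    push_cast
    ring
  rw [Finset.sum_congr rfl this]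
  simp only [Finset.sum_add_distrib, ← Finset.mul_sum]
  rw [Adel]
  simp [Tdel, Udel, Vdel]
  ring

lemma T_rec (i j : ℕ) : Tdel (i+1) (j+1) = Tdel (i+1) j + Tdel i j + Tdel i (j+1) := by
  rw [l1, l2, l3]; ring

lemma T_right (i : ℕ) : Tdel i 0 = 1 := by
  rw [Tdel]
  rw [Finset.sum_eq_single_of_mem 0 (by simp)]
  · simp
  · intro k _ hk
    rw [show Nat.choose 0 k = 0 from Nat.choose_eq_zero_of_lt (by omega)]
    simp

lemma T_left (j : ℕ) : Tdel 0 j = 1 := by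
  simp [Tdel]

lemma main_lemma (a b : ℂ) (P : ℕ → ℕ → ℂ)
    (hcol : ∀ i, P i 0 = a ^ i) (hrow : ∀ j, P 0 j = b ^ j)
    (hrec : ∀ i j, 1 ≤ i → 1 ≤ j →
      P i j = b * P i (j - 1) + a * b * P (i - 1) (j - 1) + a * P (i - 1) j) :
    ∀ i j, P i j = a ^ i * b ^ j * Tdel i j := by
  intro i
  induction i with
  | zero => intro j; rw [hrow, T_left]; ring
  | succ i ih =>
    intro j
    induction j with
    | zero => rw [hcol, T_right]; ring
    | succ j ihj =>
      have h := hrec (i+1) (j+1) (by omega) (by omega)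
      simp only [Nat.add_sub_cancel] at h
      rw [h, ih, ih, ihj, T_rec]
      ring

lemma entry_lemma (a b : ℂ) (n i j : ℕ) (hi : i < n) :
    ∑ k ∈ Finset.range n,
      ((i.choose k : ℂ) * a ^ (i - k)) * ((j.choose k : ℂ) * (2*a*b) ^ k * b ^ (j - k))
      = a ^ i * b ^ j * Tdel i j := by
  rw [← Finset.sum_subset (Finset.range_subset_range.2 hi) (by
    intro k _ hk
    simp only [Finset.mem_range, not_lt] at hk
    rw [Nat.choose_eq_zero_of_lt (by omega)]
    simp)]
  rw [Tdel, Finset.mul_sum]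
  apply Finset.sum_congr rfl
  intro k hk
  simp only [Finset.mem_range] at hk
  by_cases hkj : k ≤ j
  · have h1 : a ^ (i - k) * a ^ k = a ^ i := by rw [← pow_add]; congr 1; omega
    have h2 : b ^ (j - k) * b ^ k = b ^ j := by rw [← pow_add]; congr 1; omega
    rw [← h1, ← h2, mul_pow, mul_pow]
    ring
  · rw [show j.choose k = 0 from Nat.choose_eq_zero_of_lt (by omega)]
    simp

end Aux


theorem stmt_15 (n : ℕ) (a b : ℂ) (hab : a * b ≠ 0)
    (P : ℕ → ℕ → ℂ)
    (hcol : ∀ i, P i 0 = a ^ i) (hrow : ∀ j, P 0 j = b ^ j)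
    (hrec : ∀ i j, 1 ≤ i → 1 ≤ j →
      P i j = b * P i (j - 1) + a * b * P (i - 1) (j - 1) + a * P (i - 1) j) :
    (Matrix.of fun i j : Fin n => P i j) =
      (Matrix.of fun i j : Fin n => (Nat.choose i j : ℂ) * a ^ ((i : ℕ) - (j : ℕ))) *
        (Matrix.of fun i j : Fin n =>
          (Nat.choose i j : ℂ) * (2 * a * b) ^ (j : ℕ) * b ^ ((i : ℕ) - (j : ℕ)))ᵀ ∧
    (Matrix.of fun i j : Fin n => P i j).det = (2 * a * b) ^ (n * (n - 1) / 2) := by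
  have hP := main_lemma a b P hcol hrow hrec
  have heq : (Matrix.of fun i j : Fin n => P i j) =
      (Matrix.of fun i j : Fin n => (Nat.choose i j : ℂ) * a ^ ((i : ℕ) - (j : ℕ))) *
        (Matrix.of fun i j : Fin n =>
          (Nat.choose i j : ℂ) * (2 * a * b) ^ (j : ℕ) * b ^ ((i : ℕ) - (j : ℕ)))ᵀ := by
    ext i j
    rw [Matrix.mul_apply]
    simp only [Matrix.transpose_apply, Matrix.of_apply]
    rw [hP i j, ← entry_lemma a b n i j i.isLt,
      ← Fin.sum_univ_eq_sum_range (fun k => ((i:ℕ).choose k : ℂ) * a ^ ((i:ℕ) - k) *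
        (((j:ℕ).choose k : ℂ) * (2*a*b) ^ k * b ^ ((j:ℕ) - k))) n]
  refine ⟨heq, ?_⟩
  rw [heq, Matrix.det_mul, Matrix.det_transpose]
  have hL : (Matrix.of fun i j : Fin n => ((i:ℕ).choose (j:ℕ) : ℂ) * a ^ ((i:ℕ)-(j:ℕ))).det = 1 := by
    rw [Matrix.det_of_lowerTriangular _ (by
      intro i j hij
      simp only [Matrix.of_apply]
      rw [Nat.choose_eq_zero_of_lt (by exact_mod_cast hij)]
      simp)]
    simp
  have hR : (Matrix.of fun i j : Fin n =>
      ((i:ℕ).choose (j:ℕ) : ℂ) * (2*a*b) ^ (j:ℕ) * b ^ ((i:ℕ)-(j:ℕ))).det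
      = (2 * a * b) ^ (n * (n - 1) / 2) := by
    rw [Matrix.det_of_lowerTriangular _ (by
      intro i j hij
      simp only [Matrix.of_apply]
      rw [Nat.choose_eq_zero_of_lt (by exact_mod_cast hij)]
      simp)]
    simp only [Matrix.of_apply, Nat.choose_self, Nat.cast_one, one_mul, Nat.sub_self, pow_zero,
      mul_one]
    rw [Finset.prod_pow_eq_pow_sum]
    congr 1
    rw [Fin.sum_univ_eq_sum_range (fun k => k) n, Finset.sum_range_id]
  rw [hL, hR, one_mul]
end

section
/- Let α, β : ℕ → ℂ with α 0 = β 0, and define α̂_i = Σ_{k=0}^{i} (−1)^{i+k} C(i,k) α_k and β̂_i = Σ_{k=0}^{i} (−1)^{i+k} C(i,k) β_k. Let y ∈ ℂ. Then the n×n weighted recurrence matrix P with parameters (1, y, 1), first column α and first row β, factors as P = L · T · Lᵗ, where L_{i,j} = C(i,j) (the Pascal matrix) and T is the matrix with T_{i,j} = (1+y)^j α̂_{i-j} for i ≥ j and T_{i,j} = (1+y)^i β̂_{j-i} for i < j. -/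
open Matrix Finset

/-- The weighted Toeplitz entry function. -/
noncomputable def Tm18 (y : ℂ) (a b : ℕ → ℂ) (k l : ℕ) : ℂ :=
  if l ≤ k then (1 + y) ^ l * a (k - l) else (1 + y) ^ k * b (l - k)

/-- Entry of `L * T * Lᵀ`, written as a finite double sum over `range`. -/
noncomputable def Qm18 (y : ℂ) (a b : ℕ → ℂ) (i j : ℕ) : ℂ :=
  ∑ k ∈ Finset.range (i + 1), ∑ l ∈ Finset.range (j + 1),
    (Nat.choose i k : ℂ) * (Nat.choose j l : ℂ) * Tm18 y a b k l

lemma Tm18_shift (y : ℂ) (a b : ℕ → ℂ) (k l : ℕ) :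
    Tm18 y a b (k + 1) (l + 1) = (1 + y) * Tm18 y a b k l := by
  unfold Tm18
  simp only [Nat.add_le_add_iff_right, Nat.succ_sub_succ]
  split <;> ring

lemma alt_sum_choose (N : ℕ) :
    ∑ m ∈ Finset.range (N + 1), (-1 : ℂ) ^ m * (Nat.choose N m : ℂ) =
      if N = 0 then 1 else 0 := by
  have h := @Int.alternating_sum_range_choose N
  have : ((∑ m ∈ Finset.range (N + 1), ((-1) ^ m * Nat.choose N m : ℤ) : ℤ) : ℂ) =
      ∑ m ∈ Finset.range (N + 1), (-1 : ℂ) ^ m * (Nat.choose N m : ℂ) := by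
    push_cast
    apply Finset.sum_congr rfl
    intro x _
    ring
  rw [← this, h]
  split <;> simp

lemma delta_sum (i j : ℕ) (hj : j ≤ i) :
    ∑ k ∈ Finset.range (i + 1), (-1 : ℂ) ^ (k + j) * (Nat.choose i k : ℂ) *
      (Nat.choose k j : ℂ) = if j = i then 1 else 0 := by
  rw [Finset.range_eq_Ico, ← Finset.sum_Ico_consecutive _ (Nat.zero_le j)
    (Nat.le_succ_of_le hj)]
  have h1 : ∑ k ∈ Finset.Ico 0 j, (-1 : ℂ) ^ (k + j) * (Nat.choose i k : ℂ) *
      (Nat.choose k j : ℂ) = 0 := by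
    apply Finset.sum_eq_zero
    intro k hk
    simp only [Finset.mem_Ico] at hk
    rw [Nat.choose_eq_zero_of_lt hk.2]
    simp
  rw [h1, zero_add, Finset.sum_Ico_eq_sum_range]
  have hij : i + 1 - j = (i - j) + 1 := by omega
  rw [hij]
  have h2 : ∀ m ∈ Finset.range (i - j + 1),
      (-1 : ℂ) ^ (j + m + j) * (Nat.choose i (j + m) : ℂ) * (Nat.choose (j + m) j : ℂ)
      = (Nat.choose i j : ℂ) * ((-1 : ℂ) ^ m * (Nat.choose (i - j) m : ℂ)) := by
    intro m hm
    simp only [Finset.mem_range] at hm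
    have hkn : j + m ≤ i := by omega
    have hch : Nat.choose i (j + m) * Nat.choose (j + m) j =
        Nat.choose i j * Nat.choose (i - j) (j + m - j) := Nat.choose_mul (n := i) (k := j + m) (s := j) (Nat.le_add_right j m)
    have hsub : j + m - j = m := by omega
    rw [hsub] at hch
    have : ((Nat.choose i (j + m) * Nat.choose (j + m) j : ℕ) : ℂ) =
        ((Nat.choose i j * Nat.choose (i - j) m : ℕ) : ℂ) := by rw [hch]
    push_cast at this
    have hpow : (-1 : ℂ) ^ (j + m + j) = (-1 : ℂ) ^ m := by
      rw [show j + m + j = m + 2 * j by ring, pow_add, pow_mul]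
      simp
    rw [hpow, mul_assoc, this]
    ring
  rw [Finset.sum_congr rfl h2, ← Finset.mul_sum, alt_sum_choose]
  by_cases h : j = i
  · subst h; simp
  · have : i - j ≠ 0 := by omega
    simp [this, h]

lemma binom_inv (γ : ℕ → ℂ) (i : ℕ) :
    ∑ k ∈ Finset.range (i + 1), (Nat.choose i k : ℂ) *
      (∑ j ∈ Finset.range (k + 1), (-1 : ℂ) ^ (k + j) * (Nat.choose k j : ℂ) * γ j) = γ i := by
  have hext : ∀ k ∈ Finset.range (i + 1),
      (Nat.choose i k : ℂ) *
        (∑ j ∈ Finset.range (k + 1), (-1 : ℂ) ^ (k + j) * (Nat.choose k j : ℂ) * γ j)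
      = ∑ j ∈ Finset.range (i + 1),
          (Nat.choose i k : ℂ) * ((-1 : ℂ) ^ (k + j) * (Nat.choose k j : ℂ) * γ j) := by
    intro k hk
    simp only [Finset.mem_range] at hk
    rw [Finset.mul_sum]
    refine Finset.sum_subset (Finset.range_subset_range.mpr (by omega)) ?_
    intro x _ hx
    simp only [Finset.mem_range, not_lt] at hx
    rw [Nat.choose_eq_zero_of_lt (Nat.lt_of_succ_le hx : k < x)]
    simp
  rw [Finset.sum_congr rfl hext, Finset.sum_comm]
  have h2 : ∀ j ∈ Finset.range (i + 1),
      ∑ k ∈ Finset.range (i + 1),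
        (Nat.choose i k : ℂ) * ((-1 : ℂ) ^ (k + j) * (Nat.choose k j : ℂ) * γ j)
      = (if j = i then 1 else 0) * γ j := by
    intro j hj
    simp only [Finset.mem_range] at hj
    rw [← delta_sum i j (by omega), Finset.sum_mul]
    apply Finset.sum_congr rfl
    intro k _; ring
  rw [Finset.sum_congr rfl h2]
  simp

lemma pascal_sum (i : ℕ) (f : ℕ → ℂ) :
    ∑ k ∈ Finset.range (i + 2), (Nat.choose (i + 1) k : ℂ) * f k =
      ∑ k ∈ Finset.range (i + 1), (Nat.choose i k : ℂ) * f k +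
      ∑ k ∈ Finset.range (i + 1), (Nat.choose i k : ℂ) * f (k + 1) := by
  rw [Finset.sum_range_succ' _ (i + 1)]
  simp only [Nat.choose_succ_succ, Nat.choose_zero_right]
  push_cast
  rw [show (∑ k ∈ Finset.range (i + 1),
      ((Nat.choose i k : ℂ) + (Nat.choose i (k + 1) : ℂ)) * f (k + 1)) =
      ∑ k ∈ Finset.range (i + 1), (Nat.choose i k : ℂ) * f (k + 1) +
      ∑ k ∈ Finset.range (i + 1), (Nat.choose i (k + 1) : ℂ) * f (k + 1) by
    rw [← Finset.sum_add_distrib]; apply Finset.sum_congr rfl; intro k _; ring]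
  rw [Finset.sum_range_succ' (fun k => (Nat.choose i k : ℂ) * f k) i]
  rw [Finset.sum_range_succ (fun k => (Nat.choose i (k + 1) : ℂ) * f (k + 1)) i]
  simp [Nat.choose_succ_self]
  ring

lemma pascal_sum2 (i j : ℕ) (f : ℕ → ℕ → ℂ) :
    ∑ k ∈ Finset.range (i + 2), ∑ l ∈ Finset.range (j + 2),
      (Nat.choose (i + 1) k : ℂ) * (Nat.choose (j + 1) l : ℂ) * f k l =
    (∑ k ∈ Finset.range (i + 1), ∑ l ∈ Finset.range (j + 1),
      (Nat.choose i k : ℂ) * (Nat.choose j l : ℂ) * f k l) +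
    (∑ k ∈ Finset.range (i + 1), ∑ l ∈ Finset.range (j + 1),
      (Nat.choose i k : ℂ) * (Nat.choose j l : ℂ) * f k (l + 1)) +
    (∑ k ∈ Finset.range (i + 1), ∑ l ∈ Finset.range (j + 1),
      (Nat.choose i k : ℂ) * (Nat.choose j l : ℂ) * f (k + 1) l) +
    (∑ k ∈ Finset.range (i + 1), ∑ l ∈ Finset.range (j + 1),
      (Nat.choose i k : ℂ) * (Nat.choose j l : ℂ) * f (k + 1) (l + 1)) := by
  have step1 : ∀ k, ∑ l ∈ Finset.range (j + 2),
      (Nat.choose (i + 1) k : ℂ) * (Nat.choose (j + 1) l : ℂ) * f k l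
      = (Nat.choose (i + 1) k : ℂ) *
        ((∑ l ∈ Finset.range (j + 1), (Nat.choose j l : ℂ) * f k l) +
         (∑ l ∈ Finset.range (j + 1), (Nat.choose j l : ℂ) * f k (l + 1))) := by
    intro k
    rw [← pascal_sum j (f k), Finset.mul_sum]
    apply Finset.sum_congr rfl; intro l _; ring
  rw [Finset.sum_congr rfl (fun k _ => step1 k)]
  rw [pascal_sum i (fun k =>
    (∑ l ∈ Finset.range (j + 1), (Nat.choose j l : ℂ) * f k l) +
    (∑ l ∈ Finset.range (j + 1), (Nat.choose j l : ℂ) * f k (l + 1)))]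
  have expand : ∀ (g : ℕ → ℕ → ℂ),
      ∑ k ∈ Finset.range (i + 1), (Nat.choose i k : ℂ) *
        ((∑ l ∈ Finset.range (j + 1), (Nat.choose j l : ℂ) * g k l) +
         (∑ l ∈ Finset.range (j + 1), (Nat.choose j l : ℂ) * g k (l + 1)))
      = (∑ k ∈ Finset.range (i + 1), ∑ l ∈ Finset.range (j + 1),
          (Nat.choose i k : ℂ) * (Nat.choose j l : ℂ) * g k l) +
        (∑ k ∈ Finset.range (i + 1), ∑ l ∈ Finset.range (j + 1),
          (Nat.choose i k : ℂ) * (Nat.choose j l : ℂ) * g k (l + 1)) := by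
    intro g
    rw [← Finset.sum_add_distrib]
    apply Finset.sum_congr rfl
    intro k _
    rw [mul_add, Finset.mul_sum, Finset.mul_sum]
    congr 1 <;> (apply Finset.sum_congr rfl; intro l _; ring)
  rw [expand (fun k l => f k l), expand (fun k l => f (k + 1) l)]
  ring

lemma pascal_suml (i j : ℕ) (f : ℕ → ℕ → ℂ) :
    ∑ k ∈ Finset.range (i + 2), ∑ l ∈ Finset.range (j + 1),
      (Nat.choose (i + 1) k : ℂ) * (Nat.choose j l : ℂ) * f k l =
    (∑ k ∈ Finset.range (i + 1), ∑ l ∈ Finset.range (j + 1),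
      (Nat.choose i k : ℂ) * (Nat.choose j l : ℂ) * f k l) +
    (∑ k ∈ Finset.range (i + 1), ∑ l ∈ Finset.range (j + 1),
      (Nat.choose i k : ℂ) * (Nat.choose j l : ℂ) * f (k + 1) l) := by
  have step1 : ∀ k, ∑ l ∈ Finset.range (j + 1),
      (Nat.choose (i + 1) k : ℂ) * (Nat.choose j l : ℂ) * f k l
      = (Nat.choose (i + 1) k : ℂ) *
        ∑ l ∈ Finset.range (j + 1), (Nat.choose j l : ℂ) * f k l := by
    intro k; rw [Finset.mul_sum]; apply Finset.sum_congr rfl; intro l _; ring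
  rw [Finset.sum_congr rfl (fun k _ => step1 k),
      pascal_sum i (fun k => ∑ l ∈ Finset.range (j + 1), (Nat.choose j l : ℂ) * f k l)]
  congr 1 <;>
  · apply Finset.sum_congr rfl
    intro k _
    rw [Finset.mul_sum]
    apply Finset.sum_congr rfl
    intro l _
    ring

lemma pascal_sumr (i j : ℕ) (f : ℕ → ℕ → ℂ) :
    ∑ k ∈ Finset.range (i + 1), ∑ l ∈ Finset.range (j + 2),
      (Nat.choose i k : ℂ) * (Nat.choose (j + 1) l : ℂ) * f k l =
    (∑ k ∈ Finset.range (i + 1), ∑ l ∈ Finset.range (j + 1),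
      (Nat.choose i k : ℂ) * (Nat.choose j l : ℂ) * f k l) +
    (∑ k ∈ Finset.range (i + 1), ∑ l ∈ Finset.range (j + 1),
      (Nat.choose i k : ℂ) * (Nat.choose j l : ℂ) * f k (l + 1)) := by
  rw [← Finset.sum_add_distrib]
  apply Finset.sum_congr rfl
  intro k _
  have step1 : ∑ l ∈ Finset.range (j + 2),
      (Nat.choose i k : ℂ) * (Nat.choose (j + 1) l : ℂ) * f k l
      = ∑ l ∈ Finset.range (j + 2),
        (Nat.choose (j + 1) l : ℂ) * ((Nat.choose i k : ℂ) * f k l) := by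
    apply Finset.sum_congr rfl; intro l _; ring
  rw [step1, pascal_sum j (fun l => (Nat.choose i k : ℂ) * f k l)]
  congr 1 <;> (apply Finset.sum_congr rfl; intro l _; ring)

lemma Qm18_rec (y : ℂ) (a b : ℕ → ℂ) (i j : ℕ) :
    Qm18 y a b (i + 1) (j + 1) =
      Qm18 y a b (i + 1) j + y * Qm18 y a b i j + Qm18 y a b i (j + 1) := by
  have hshift : (∑ k ∈ Finset.range (i + 1), ∑ l ∈ Finset.range (j + 1),
      (Nat.choose i k : ℂ) * (Nat.choose j l : ℂ) * Tm18 y a b (k + 1) (l + 1))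
      = (1 + y) * Qm18 y a b i j := by
    rw [Qm18, Finset.mul_sum]
    apply Finset.sum_congr rfl
    intro k _
    rw [Finset.mul_sum]
    apply Finset.sum_congr rfl
    intro l _
    rw [Tm18_shift]; ring
  have lhs : Qm18 y a b (i + 1) (j + 1) =
      Qm18 y a b i j +
      (∑ k ∈ Finset.range (i + 1), ∑ l ∈ Finset.range (j + 1),
        (Nat.choose i k : ℂ) * (Nat.choose j l : ℂ) * Tm18 y a b k (l + 1)) +
      (∑ k ∈ Finset.range (i + 1), ∑ l ∈ Finset.range (j + 1),
        (Nat.choose i k : ℂ) * (Nat.choose j l : ℂ) * Tm18 y a b (k + 1) l) +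
      (1 + y) * Qm18 y a b i j := by
    rw [Qm18, pascal_sum2 i j (Tm18 y a b), ← hshift]
    rfl
  have hr1 : Qm18 y a b (i + 1) j =
      Qm18 y a b i j +
      (∑ k ∈ Finset.range (i + 1), ∑ l ∈ Finset.range (j + 1),
        (Nat.choose i k : ℂ) * (Nat.choose j l : ℂ) * Tm18 y a b (k + 1) l) := by
    rw [Qm18, pascal_suml i j (Tm18 y a b)]
    rfl
  have hr2 : Qm18 y a b i (j + 1) =
      Qm18 y a b i j +
      (∑ k ∈ Finset.range (i + 1), ∑ l ∈ Finset.range (j + 1),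
        (Nat.choose i k : ℂ) * (Nat.choose j l : ℂ) * Tm18 y a b k (l + 1)) := by
    rw [Qm18, pascal_sumr i j (Tm18 y a b)]
    rfl
  rw [lhs, hr1, hr2]
  ring

theorem stmt_18 (n : ℕ) (y : ℂ) (α β : ℕ → ℂ) (hαβ : α 0 = β 0)
    (P : ℕ → ℕ → ℂ)
    (hcol : ∀ i, P i 0 = α i) (hrow : ∀ j, P 0 j = β j)
    (hrec : ∀ i j, 1 ≤ i → 1 ≤ j →
      P i j = P i (j - 1) + y * P (i - 1) (j - 1) + P (i - 1) j) :
    let hatα : ℕ → ℂ := fun i =>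
      ∑ k ∈ Finset.range (i + 1), (-1 : ℂ) ^ (i + k) * (Nat.choose i k : ℂ) * α k
    let hatβ : ℕ → ℂ := fun i =>
      ∑ k ∈ Finset.range (i + 1), (-1 : ℂ) ^ (i + k) * (Nat.choose i k : ℂ) * β k
    let L : Matrix (Fin n) (Fin n) ℂ := Matrix.of fun i j : Fin n => (Nat.choose i j : ℂ)
    (Matrix.of fun i j : Fin n => P i j) =
      L * (Matrix.of fun i j : Fin n =>
        if (j : ℕ) ≤ (i : ℕ) then (1 + y) ^ (j : ℕ) * hatα ((i : ℕ) - (j : ℕ))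
        else (1 + y) ^ (i : ℕ) * hatβ ((j : ℕ) - (i : ℕ))) * Lᵀ := by
  intro hatα hatβ L
  have hhat0 : hatα 0 = hatβ 0 := by
    simp only [hatα, hatβ]
    simp [hαβ]
  have hQcol : ∀ i, Qm18 y hatα hatβ i 0 = α i := by
    intro i
    have h1 : Qm18 y hatα hatβ i 0 =
        ∑ k ∈ Finset.range (i + 1), (Nat.choose i k : ℂ) * hatα k := by
      unfold Qm18
      apply Finset.sum_congr rfl
      intro k _
      simp [Tm18]
    rw [h1]
    simp only [hatα]
    exact binom_inv α i
  have hQrow : ∀ j, Qm18 y hatα hatβ 0 j = β j := by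
    intro j
    have h1 : Qm18 y hatα hatβ 0 j =
        ∑ l ∈ Finset.range (j + 1), (Nat.choose j l : ℂ) * hatβ l := by
      unfold Qm18
      rw [show (0 : ℕ) + 1 = 1 from rfl, Finset.sum_range_one]
      apply Finset.sum_congr rfl
      intro l _
      rcases Nat.eq_zero_or_pos l with hl | hl
      · subst hl; simp [Tm18, hhat0]
      · have hl' : ¬ l ≤ 0 := by omega
        simp [Tm18, hl']
    rw [h1]
    simp only [hatβ]
    exact binom_inv β j
  have hPQ : ∀ N i j, i + j = N → P i j = Qm18 y hatα hatβ i j := by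
    intro N
    induction N using Nat.strong_induction_on with
    | _ N ih =>
      intro i j hN
      match i, j with
      | 0, j => rw [hrow j, hQrow j]
      | (i + 1), 0 => rw [hcol, hQcol]
      | (i + 1), (j + 1) =>
        rw [hrec (i + 1) (j + 1) (by omega) (by omega)]
        simp only [Nat.add_sub_cancel]
        rw [ih (i + 1 + j) (by omega) (i + 1) j rfl,
            ih (i + j) (by omega) i j rfl,
            ih (i + (j + 1)) (by omega) i (j + 1) rfl, Qm18_rec]
  have hTmat : (Matrix.of fun k l : Fin n =>
      if (l : ℕ) ≤ (k : ℕ) then (1 + y) ^ (l : ℕ) * hatα ((k : ℕ) - (l : ℕ))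
      else (1 + y) ^ (k : ℕ) * hatβ ((l : ℕ) - (k : ℕ)))
      = Matrix.of fun k l : Fin n => Tm18 y hatα hatβ (k : ℕ) (l : ℕ) := rfl
  rw [hTmat]
  ext i j
  simp only [Matrix.mul_apply, Matrix.transpose_apply, Matrix.of_apply, L]
  have key : P (i : ℕ) (j : ℕ) = ∑ k ∈ Finset.range n, ∑ l ∈ Finset.range n,
      (Nat.choose (i : ℕ) k : ℂ) * (Nat.choose (j : ℕ) l : ℂ) * Tm18 y hatα hatβ k l := by
    rw [hPQ ((i : ℕ) + (j : ℕ)) i j rfl]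
    unfold Qm18
    have hinner : ∀ k : ℕ, ∑ l ∈ Finset.range ((j : ℕ) + 1),
        (Nat.choose (i : ℕ) k : ℂ) * (Nat.choose (j : ℕ) l : ℂ) * Tm18 y hatα hatβ k l
        = ∑ l ∈ Finset.range n,
        (Nat.choose (i : ℕ) k : ℂ) * (Nat.choose (j : ℕ) l : ℂ) * Tm18 y hatα hatβ k l := by
      intro k
      refine Finset.sum_subset (Finset.range_subset_range.mpr j.isLt) ?_
      intro x _ hx
      simp only [Finset.mem_range, not_lt] at hx
      rw [Nat.choose_eq_zero_of_lt (Nat.lt_of_succ_le hx : (j : ℕ) < x)]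
      simp
    rw [Finset.sum_congr rfl (fun k _ => hinner k)]
    refine Finset.sum_subset (Finset.range_subset_range.mpr i.isLt) ?_
    intro x _ hx
    simp only [Finset.mem_range, not_lt] at hx
    apply Finset.sum_eq_zero
    intro l _
    rw [Nat.choose_eq_zero_of_lt (Nat.lt_of_succ_le hx : (i : ℕ) < x)]
    simp
  rw [key]
  symm
  rw [Fin.sum_univ_eq_sum_range (fun l => (∑ k : Fin n,
      (Nat.choose (i : ℕ) (k : ℕ) : ℂ) * Tm18 y hatα hatβ (k : ℕ) l) *
      (Nat.choose (j : ℕ) l : ℂ)) n]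
  have hl : ∀ l ∈ Finset.range n, (∑ k : Fin n,
      (Nat.choose (i : ℕ) (k : ℕ) : ℂ) * Tm18 y hatα hatβ (k : ℕ) l) *
      (Nat.choose (j : ℕ) l : ℂ)
      = ∑ k ∈ Finset.range n,
        (Nat.choose (i : ℕ) k : ℂ) * (Nat.choose (j : ℕ) l : ℂ) * Tm18 y hatα hatβ k l := by
    intro l _
    rw [Fin.sum_univ_eq_sum_range (fun k =>
      (Nat.choose (i : ℕ) k : ℂ) * Tm18 y hatα hatβ k l) n, Finset.sum_mul]
    apply Finset.sum_congr rfl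
    intro k _
    ring
  rw [Finset.sum_congr rfl hl]
  exact Finset.sum_comm
end
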